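/- arXiv:2408.05021 — 7 statements merged into one kernel-verified Lean document; each statement's English description precedes it below -/
import Mathlib

section
/- Let λ > 0 and s > 0, and define J : (s,∞) → ℝ by J(r) = 2π/log(r/s) + π·λ²·(r² − s²). Then J attains a unique global minimum on (s,∞) at the point r = F(s); that is, J(F(s)) < J(r) for every r ∈ (s,∞) with r ≠ F(s). -/
open Real

/-!
Write `t = log (r/s)` and `u = log (F/s)`, so that `λ F u = 1`. Completing the square gives
`1/t ≥ 2λF − λ²F² t`, and concavity of `log` at `F` gives `F t ≤ F u + (r − F)`. Together they
bound the energy below by `J(F) + πλ²(r − F)²`, which exceeds `J(F)` unless `r = F`.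
-/

noncomputable def bernoulliEnergy (lam s r : ℝ) : ℝ :=
  2 * π / log (r / s) + π * lam ^ 2 * (r ^ 2 - s ^ 2)

lemma two_mul_sub_sq_mul_le_inv (a : ℝ) {t : ℝ} (ht : 0 < t) : 2 * a - a ^ 2 * t ≤ t⁻¹ := by
  have h : t⁻¹ - (2 * a - a ^ 2 * t) = (1 - a * t) ^ 2 / t := by
    field_simp
    ring
  have : 0 ≤ (1 - a * t) ^ 2 / t := by positivity
  linarith

lemma Real.log_le_log_add_sub_div {x y : ℝ} (hx : 0 < x) (hy : 0 < y) :
    log x ≤ log y + (x - y) / y := by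
  have h := log_le_sub_one_of_pos (div_pos hx hy)
  rw [log_div hx.ne' hy.ne'] at h
  rw [sub_div, div_self hy.ne']
  linarith

lemma bernoulliEnergy_add_sq_le {lam s F r : ℝ} (hs : 0 < s) (hFs : s < F) (hr : s < r)
    (hF : lam * F * log (F / s) = 1) :
    bernoulliEnergy lam s F + π * lam ^ 2 * (r - F) ^ 2 ≤ bernoulliEnergy lam s r := by
  have hF0 : 0 < F := hs.trans hFs
  have ht : 0 < log (r / s) := log_pos ((one_lt_div hs).2 hr)
  have hu : 0 < log (F / s) := log_pos ((one_lt_div hs).2 hFs)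
  have energy_F : 2 * π / log (F / s) = 2 * π * lam * F := by
    field_simp
    linear_combination -hF
  have square : 2 * (lam * F) - (lam * F) ^ 2 * log (r / s) ≤ (log (r / s))⁻¹ :=
    two_mul_sub_sq_mul_le_inv _ ht
  have tangent : F * log (r / s) ≤ F * log (F / s) + (r - F) := by
    have h := log_le_log_add_sub_div (div_pos (hs.trans hr) hs) (div_pos hF0 hs)
    rw [show (r / s - F / s) / (F / s) = (r - F) / F by field_simp] at h
    have := mul_le_mul_of_nonneg_left h hF0.le
    rwa [mul_add, mul_div_cancel₀ _ hF0.ne'] at this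
  unfold bernoulliEnergy
  rw [energy_F, div_eq_mul_inv]
  linear_combination (2 * π) * square + (2 * π * lam ^ 2 * F) * tangent + (2 * π * lam * F) * hF

theorem energy_unique_minimizer_general (lam s F : ℝ) (hs : 0 < s)
    (hF : F > s ∧ lam * F * Real.log (F / s) = 1)
    (J : ℝ → ℝ)
    (hJ : ∀ r : ℝ, J r = 2 * π / Real.log (r / s) + π * lam ^ 2 * (r ^ 2 - s ^ 2)) :
    ∀ r : ℝ, r > s → r ≠ F → J F < J r := by
  intro r hr hrF
  obtain ⟨hFs, hF⟩ := hF
  have hlam : lam ≠ 0 := by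
    rintro rfl
    simp at hF
  have hgap : 0 < π * lam ^ 2 * (r - F) ^ 2 := by
    have := sub_ne_zero.2 hrF
    positivity
  obtain rfl : J = bernoulliEnergy lam s := funext hJ
  linarith [bernoulliEnergy_add_sq_le hs hFs hr hF]

/-- The Dirichlet energy `J r = 2π / log (r/s) + π λ² (r² − s²)` of Bernoulli's free
boundary problem for concentric circles attains its unique global minimum on `(s, ∞)`
at `r = F s`, where `F s` is the unique `r > s` with `λ r log (r/s) = 1`. -/
theorem energy_unique_minimizer (lam s F : ℝ) (hlam : 0 < lam) (hs : 0 < s)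
    (hF : F > s ∧ lam * F * Real.log (F / s) = 1)
    (J : ℝ → ℝ)
    (hJ : ∀ r : ℝ, J r = 2 * π / Real.log (r / s) + π * lam ^ 2 * (r ^ 2 - s ^ 2)) :
    ∀ r : ℝ, r > s → r ≠ F → J F < J r :=
  energy_unique_minimizer_general lam s F hs hF J hJ
end

section
/- Let λ > 0. The map s ↦ F(s) is strictly increasing on (0,∞), and F(s) > s for every s > 0. -/
/-- The map `s ↦ F s`, where `F s` is the unique `r > s` with `λ r log (r/s) = 1`,
is strictly increasing on `(0, ∞)`, and `F s > s` for every `s > 0`. -/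
theorem free_boundary_radius_strictMono (lam : ℝ) (hlam : 0 < lam) (F : ℝ → ℝ)
    (hF : ∀ s : ℝ, 0 < s → F s > s ∧ lam * F s * Real.log (F s / s) = 1) :
    StrictMonoOn F (Set.Ioi 0) ∧ ∀ s : ℝ, 0 < s → F s > s := by
  refine ⟨?_, fun s hs => (hF s hs).1⟩
  intro s1 hs1 s2 hs2 h12
  simp only [Set.mem_Ioi] at hs1 hs2
  by_contra hlt
  push_neg at hlt
  obtain ⟨g1, e1⟩ := hF s1 hs1
  obtain ⟨g2, e2⟩ := hF s2 hs2
  have hF2pos : 0 < F s2 := lt_trans hs2 g2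
  have hF1pos : 0 < F s1 := lt_trans hs1 g1
  have hF2s1 : s1 < F s2 := lt_trans h12 g2
  have hdivpos : 0 < F s2 / s2 := div_pos hF2pos hs2
  -- log (F s2 / s2) < log (F s2 / s1)
  have hdiv : F s2 / s2 < F s2 / s1 := by
    apply div_lt_div_of_pos_left hF2pos hs1 h12
  have l2 : Real.log (F s2 / s2) < Real.log (F s2 / s1) := Real.log_lt_log hdivpos hdiv
  -- log (F s2 / s1) ≤ log (F s1 / s1)
  have hdiv2 : F s2 / s1 ≤ F s1 / s1 := by gcongr
  have l3 : Real.log (F s2 / s1) ≤ Real.log (F s1 / s1) :=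
    Real.log_le_log (by positivity) hdiv2
  -- nonnegativity of log (F s2 / s1)
  have l4 : 0 < Real.log (F s2 / s1) := Real.log_pos (by rw [lt_div_iff₀ hs1]; linarith)
  -- chain: 1 = lam * F s2 * log (F s2 / s2) < lam * F s2 * log (F s2 / s1)
  --        ≤ lam * F s1 * log (F s1 / s1) = 1
  have key : lam * F s2 * Real.log (F s2 / s2) < lam * F s1 * Real.log (F s1 / s1) := by
    calc lam * F s2 * Real.log (F s2 / s2)
        < lam * F s2 * Real.log (F s2 / s1) := by
          apply mul_lt_mul_of_pos_left l2 (by positivity)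
      _ ≤ lam * F s1 * Real.log (F s1 / s1) := by
          apply mul_le_mul (by nlinarith) l3 l4.le (by positivity)
  rw [e1, e2] at key
  exact lt_irrefl 1 key
end

section
/- Let X and H be real Hilbert spaces, e : X → H a continuous linear map, O ⊆ X an open convex set, X_ad ⊆ O a convex set, and j : O → ℝ twice continuously Fréchet differentiable with D²j(h)[q,q] ≥ c_E·‖e q‖_H² for all h ∈ X_ad and all q ∈ X, where c_E > 0. If h* ∈ X_ad satisfies the variational inequality Dj(h*)[h − h*] ≥ 0 for all h ∈ X_ad, then j(h) − j(h*) ≥ (c_E/2)·‖e(h − h*)‖_H² for every h ∈ X_ad. -/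
/-!
Restricted to the segment `t ↦ h* + t • (h - h*)`, which stays in `X_ad` by convexity, `j` becomes
a real function whose second derivative is at least `c_E ‖e (h - h*)‖²` by coercivity and whose
first derivative at `0` is `Dj(h*)[h - h*] ≥ 0`; the one-dimensional second-order Taylor bound
then gives the growth estimate.
-/

open Set

theorem monotoneOn_Icc_of_hasDerivAt_nonneg {f f' : ℝ → ℝ} {a b : ℝ}
    (hf : ∀ t ∈ Icc a b, HasDerivAt f (f' t) t) (hf' : ∀ t ∈ Icc a b, 0 ≤ f' t) :
    MonotoneOn f (Icc a b) :=
  monotoneOn_of_hasDerivWithinAt_nonneg (convex_Icc a b)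
    (fun t ht ↦ (hf t ht).continuousAt.continuousWithinAt)
    (fun t ht ↦ (hf t (interior_subset ht)).hasDerivWithinAt)
    (fun t ht ↦ hf' t (interior_subset ht))

theorem sub_ge_of_le_second_deriv {f f' f'' : ℝ → ℝ} {a b m : ℝ} (hab : a ≤ b)
    (hf : ∀ t ∈ Icc a b, HasDerivAt f (f' t) t)
    (hf' : ∀ t ∈ Icc a b, HasDerivAt f' (f'' t) t) (hm : ∀ t ∈ Icc a b, m ≤ f'' t) :
    f b - f a ≥ f' a * (b - a) + m / 2 * (b - a) ^ 2 := by
  have ha : a ∈ Icc a b := left_mem_Icc.2 hab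
  have hb : b ∈ Icc a b := right_mem_Icc.2 hab
  have hslope : ∀ t ∈ Icc a b, f' a + m * (t - a) ≤ f' t := by
    have hmono : MonotoneOn (fun t ↦ f' t - t * m) (Icc a b) :=
      monotoneOn_Icc_of_hasDerivAt_nonneg (fun t ht ↦ (hf' t ht).sub (hasDerivAt_mul_const m))
        (fun t ht ↦ sub_nonneg.2 (hm t ht))
    intro t ht
    have := hmono ha ht ht.1
    simp only at this
    linarith
  have hmono : MonotoneOn (fun t ↦ f t - t * f' a - (t - a) ^ 2 * (m / 2)) (Icc a b) :=
    monotoneOn_Icc_of_hasDerivAt_nonneg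
      (fun t ht ↦ ((hf t ht).sub (hasDerivAt_mul_const (f' a))).sub
        ((((hasDerivAt_id' t).sub_const a).pow 2).mul_const (m / 2)))
      (fun t ht ↦ by simp only [Nat.cast_ofNat]; nlinarith [hslope t ht])
  have := hmono ha hb hab
  simp only [sub_self] at this
  nlinarith

theorem Convex.sub_ge_of_le_second_fderiv {E : Type*} [NormedAddCommGroup E] [NormedSpace ℝ E]
    {s : Set E} (hs : Convex ℝ s) {f : E → ℝ} {f' : E → E →L[ℝ] ℝ}
    {f'' : E → E →L[ℝ] E →L[ℝ] ℝ} (hf : ∀ x ∈ s, HasFDerivAt f (f' x) x)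
    (hf' : ∀ x ∈ s, HasFDerivAt f' (f'' x) x) {x y : E} (hx : x ∈ s) (hy : y ∈ s) {m : ℝ}
    (hm : ∀ z ∈ s, m ≤ f'' z (y - x) (y - x)) :
    f y - f x ≥ f' x (y - x) + m / 2 := by
  set v := y - x
  have hmem : ∀ t ∈ Icc (0 : ℝ) 1, x + t • v ∈ s := fun t ht ↦ hs.add_smul_sub_mem hx hy ht
  have hline : ∀ t : ℝ, HasDerivAt (fun t : ℝ ↦ x + t • v) v t := fun t ↦ by
    simpa using ((hasDerivAt_id t).smul_const v).const_add x
  have := sub_ge_of_le_second_deriv zero_le_one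
    (f := fun t ↦ f (x + t • v)) (f' := fun t ↦ f' (x + t • v) v)
    (f'' := fun t ↦ f'' (x + t • v) v v)
    (fun t ht ↦ (hf _ (hmem t ht)).comp_hasDerivAt t (hline t))
    (fun t ht ↦ by
      exact ((ContinuousLinearMap.apply ℝ ℝ v).hasFDerivAt.comp _
        (hf' _ (hmem t ht))).comp_hasDerivAt t (hline t))
    (fun t ht ↦ hm _ (hmem t ht))
  simpa [v] using this

theorem two_norm_quadratic_growth_general
    {X : Type*} [NormedAddCommGroup X] [InnerProductSpace ℝ X]
    {H : Type*} [NormedAddCommGroup H] [InnerProductSpace ℝ H]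
    (e : X →L[ℝ] H)
    (O : Set X)
    (Xad : Set X) (hXadO : Xad ⊆ O) (hXad : Convex ℝ Xad)
    (j : X → ℝ) (j' : X → X →L[ℝ] ℝ) (j'' : X → X →L[ℝ] X →L[ℝ] ℝ)
    (hj' : ∀ h ∈ O, HasFDerivAt j (j' h) h)
    (hj'' : ∀ h ∈ O, HasFDerivAt j' (j'' h) h)
    (cE : ℝ)
    (hcoerc : ∀ h ∈ Xad, ∀ q : X, cE * ‖e q‖ ^ 2 ≤ j'' h q q)
    (hstar : X) (hstar_mem : hstar ∈ Xad)
    (hVI : ∀ h ∈ Xad, j' hstar (h - hstar) ≥ 0) :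
    ∀ h ∈ Xad, j h - j hstar ≥ cE / 2 * ‖e (h - hstar)‖ ^ 2 := by
  intro h hh
  have := hXad.sub_ge_of_le_second_fderiv (fun x hx ↦ hj' x (hXadO hx))
    (fun x hx ↦ hj'' x (hXadO hx)) hstar_mem hh (fun z hz ↦ hcoerc z hz (h - hstar))
  linarith [hVI h hh]

/-- Abstract two-norm setting: quadratic growth at a stationary point. If `h* ∈ X_ad`
satisfies the variational inequality `Dj(h*)[h − h*] ≥ 0` for all `h ∈ X_ad`, and the
second derivative of `j` is `H`-coercive on `X_ad`, then
`j(h) − j(h*) ≥ (c_E/2)‖e(h − h*)‖_H²` for every `h ∈ X_ad`. -/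
theorem two_norm_quadratic_growth
    {X : Type*} [NormedAddCommGroup X] [InnerProductSpace ℝ X] [CompleteSpace X]
    {H : Type*} [NormedAddCommGroup H] [InnerProductSpace ℝ H] [CompleteSpace H]
    (e : X →L[ℝ] H)
    (O : Set X) (hO : IsOpen O) (hOconv : Convex ℝ O)
    (Xad : Set X) (hXadO : Xad ⊆ O) (hXad : Convex ℝ Xad)
    (j : X → ℝ) (j' : X → X →L[ℝ] ℝ) (j'' : X → X →L[ℝ] X →L[ℝ] ℝ)
    (hj' : ∀ h ∈ O, HasFDerivAt j (j' h) h)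
    (hj'' : ∀ h ∈ O, HasFDerivAt j' (j'' h) h)
    (hj''cont : ContinuousOn j'' O)
    (cE : ℝ) (hcE : 0 < cE)
    (hcoerc : ∀ h ∈ Xad, ∀ q : X, cE * ‖e q‖ ^ 2 ≤ j'' h q q)
    (hstar : X) (hstar_mem : hstar ∈ Xad)
    (hVI : ∀ h ∈ Xad, j' hstar (h - hstar) ≥ 0) :
    ∀ h ∈ Xad, j h - j hstar ≥ cE / 2 * ‖e (h - hstar)‖ ^ 2 :=
  two_norm_quadratic_growth_general e O Xad hXadO hXad j j' j'' hj' hj'' cE hcoerc hstar hstar_mem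
    hVI
end

section
/- Let (Ω, 𝔉, ℙ) be a probability space, 𝔊 ⊆ 𝔉 a sub-σ-algebra, and X a separable real Hilbert space. Let X_ad ⊆ X be a nonempty, closed, convex set, π : X → X the metric projection onto X_ad (characterized by π(z) ∈ X_ad and ⟨z − π(z), w − π(z)⟩_X ≤ 0 for all w ∈ X_ad, z ∈ X), and j : X → ℝ Fréchet differentiable with gradient ∇j : X → X (the X-Riesz representative of Dj). Assume j is convex on X_ad, so that j(h₂) ≥ j(h₁) + ⟨∇j(h₁), h₂ − h₁⟩_X for all h₁, h₂ ∈ X_ad. Let h : Ω → X be a 𝔊-measurable random variable with values in X_ad, h* ∈ X_ad a point satisfying ⟨∇j(h*), w − h*⟩_X ≥ 0 for all w ∈ X_ad, t ≥ 0, and g : Ω → X a Bochner square-integrable random variable such that, almost surely, E[g | 𝔊] = ∇j(h) + b for a 𝔊-measurable b : Ω → X with ‖b‖_X ≤ K almost surely, and E[‖g‖_X² | 𝔊] ≤ M almost surely. Then, almost surely, E[ ‖π(h − t·g) − h*‖_X² | 𝔊 ] ≤ ‖h − h*‖_X² − 2t·( j(h) − j(h*) ) + 2t·K·‖h − h*‖_X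 + t²·M. -/
/-!
Projection onto `Xad` moves no point farther from `h* ∈ Xad`, so the new error is at most
`‖(h - h*) - t g‖²`. Since `h` is `𝔊`-measurable, the conditional expectation of that square is
`‖h - h*‖² - 2t⟪h - h*, E[g | 𝔊]⟫ + t² E[‖g‖² | 𝔊]`, and convexity together with the bias bound
gives `⟪h - h*, ∇j(h) + b⟫ ≥ j(h) - j(h*) - K‖h - h*‖`.

As `h - h*` need not be integrable, the pull-out is applied on the `𝔊`-measurable sets
`{‖h - h*‖ ≤ n}`, where the conditional expectation is local. The comparison on these sets
also holds when the left-hand side is not integrable, because its conditional expectation is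
then `0` while the bound dominates a nonnegative function.
-/

open MeasureTheory
open scoped RealInnerProductSpace

theorem norm_sub_sq_le_of_inner_sub_nonpos {X : Type*} [NormedAddCommGroup X]
    [InnerProductSpace ℝ X] {z p w : X} (h : ⟪z - p, w - p⟫ ≤ 0) :
    ‖p - w‖ ^ 2 ≤ ‖z - w‖ ^ 2 := by
  have hexpand := norm_sub_sq_real (z - p) (w - p)
  rw [sub_sub_sub_cancel_right, norm_sub_rev w p] at hexpand
  nlinarith [sq_nonneg ‖z - p‖]

theorem sub_mul_norm_le_inner_add {X : Type*} [NormedAddCommGroup X] [InnerProductSpace ℝ X]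
    {v a b : X} {δ K : ℝ} (ha : δ ≤ ⟪v, a⟫) (hb : ‖b‖ ≤ K) :
    δ - K * ‖v‖ ≤ ⟪v, a + b⟫ := by
  have := neg_le_of_abs_le (abs_real_inner_le_norm v b)
  rw [inner_add_right]
  nlinarith [norm_nonneg v]

section CondExp

variable {Ω : Type*} {m m0 : MeasurableSpace Ω} {μ : Measure Ω}

theorem ae_condExp_le_condExp_of_le_on (hm : m ≤ m0) [IsFiniteMeasure μ] {f g : Ω → ℝ}
    {s : Set Ω} (hs : MeasurableSet[m] s) (hg : Integrable g μ) (hf : ∀ ω ∈ s, 0 ≤ f ω)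
    (hfg : ∀ ω ∈ s, f ω ≤ g ω) :
    ∀ᵐ ω ∂μ, ω ∈ s → μ[f | m] ω ≤ μ[g | m] ω := by
  refine ae_imp_of_ae_restrict ?_
  have hfg' : f ≤ᵐ[μ.restrict s] g := (ae_restrict_iff' (hm s hs)).2 (ae_of_all _ hfg)
  have hg_eq := condExp_restrict_ae_eq_restrict hm hs hg
  by_cases hfi : Integrable f μ
  · filter_upwards [(condExp_restrict_ae_eq_restrict hm hs hfi).symm,
      condExp_mono hfi.restrict hg.restrict hfg' (m := m), hg_eq] with ω hf_eq hle hg_eq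
    rw [hf_eq, ← hg_eq]
    exact hle
  · have hg0 : 0 ≤ᵐ[μ.restrict s] g :=
      ((ae_restrict_iff' (hm s hs)).2 (ae_of_all _ hf)).mp (hfg'.mono fun _ h1 h0 => h0.trans h1)
    filter_upwards [condExp_nonneg hg0 (m := m), hg_eq] with ω h0 hg_eq
    rw [condExp_of_not_integrable hfi, ← hg_eq]
    exact h0

variable {X : Type*} [NormedAddCommGroup X] [InnerProductSpace ℝ X]

theorem integrable_norm_sub_smul_sq [IsFiniteMeasure μ] {u g : Ω → X} {c : ℝ}
    (hu : AEStronglyMeasurable u μ) (hu_bdd : ∀ ω, ‖u ω‖ ≤ c) (hg : MemLp g 2 μ) (t : ℝ) :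
    Integrable (fun ω => ‖u ω - t • g ω‖ ^ 2) μ := by
  have hu2 : MemLp u 2 μ := MemLp.of_bound hu c (ae_of_all _ hu_bdd)
  exact (memLp_two_iff_integrable_sq_norm (hu.sub (hg.1.const_smul t))).1
    (hu2.sub (hg.const_smul t))

theorem condExp_norm_sub_smul_sq [CompleteSpace X] (hm : m ≤ m0) [IsFiniteMeasure μ]
    {u g : Ω → X} {c : ℝ} (hu : StronglyMeasurable[m] u) (hu_bdd : ∀ ω, ‖u ω‖ ≤ c)
    (hg : MemLp g 2 μ) (t : ℝ) :
    μ[(fun ω => ‖u ω - t • g ω‖ ^ 2) | m] =ᵐ[μ] fun ω =>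
      ‖u ω‖ ^ 2 - 2 * t * ⟪u ω, μ[g | m] ω⟫ + t ^ 2 * μ[(fun ω => ‖g ω‖ ^ 2) | m] ω := by
  have hu0 : AEStronglyMeasurable u μ := (hu.mono hm).aestronglyMeasurable
  have hu_sq : Integrable (fun ω => ‖u ω‖ ^ 2) μ :=
    (memLp_two_iff_integrable_sq_norm hu0).1 (MemLp.of_bound hu0 c (ae_of_all _ hu_bdd))
  have hug : Integrable (fun ω => ⟪u ω, g ω⟫) μ :=
    (innerSL ℝ).integrable_of_bilin_of_bdd_left c hu0 (ae_of_all _ hu_bdd)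
      (hg.integrable one_le_two)
  have hg_sq : Integrable (fun ω => ‖g ω‖ ^ 2) μ :=
    (memLp_two_iff_integrable_sq_norm hg.1).1 hg
  have hexpand : (fun ω => ‖u ω - t • g ω‖ ^ 2) = (fun ω => ‖u ω‖ ^ 2)
      - (2 * t) • (fun ω => ⟪u ω, g ω⟫) + t ^ 2 • (fun ω => ‖g ω‖ ^ 2) := by
    ext ω
    simp only [Pi.add_apply, Pi.sub_apply, Pi.smul_apply, smul_eq_mul, norm_sub_sq_real,
      inner_smul_right, norm_smul, mul_pow, Real.norm_eq_abs, sq_abs]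
    ring
  have hpull : μ[(fun ω => ⟪u ω, g ω⟫) | m] =ᵐ[μ] fun ω => ⟪u ω, μ[g | m] ω⟫ :=
    condExp_bilin_of_stronglyMeasurable_left (innerSL ℝ) hu hug (hg.integrable one_le_two)
  have hu_sq_m : μ[(fun ω => ‖u ω‖ ^ 2) | m] = fun ω => ‖u ω‖ ^ 2 :=
    condExp_of_stronglyMeasurable hm (hu.norm.pow 2) hu_sq
  rw [hexpand]
  filter_upwards [condExp_add (hu_sq.sub (hug.smul (2 * t))) (hg_sq.smul (t ^ 2)) m,
    condExp_sub hu_sq (hug.smul (2 * t)) m, condExp_smul (2 * t) (fun ω => ⟪u ω, g ω⟫) m,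
    condExp_smul (t ^ 2) (fun ω => ‖g ω‖ ^ 2) m, hpull] with ω h1 h2 h3 h4 h5
  simp only [Pi.add_apply, Pi.sub_apply, Pi.smul_apply, smul_eq_mul] at h1 h2 h3 h4 ⊢
  rw [h1, h2, h3, h4, h5, hu_sq_m]

theorem ae_condExp_le_of_le_norm_sub_smul_sq [CompleteSpace X] (hm : m ≤ m0)
    [IsFiniteMeasure μ] {f : Ω → ℝ} {u g : Ω → X} {c : ℝ} {s : Set Ω}
    (hs : MeasurableSet[m] s) (hu : StronglyMeasurable[m] u) (hu_bdd : ∀ ω, ‖u ω‖ ≤ c)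
    (hg : MemLp g 2 μ) (t : ℝ) (hf0 : ∀ ω ∈ s, 0 ≤ f ω)
    (hf : ∀ ω ∈ s, f ω ≤ ‖u ω - t • g ω‖ ^ 2) :
    ∀ᵐ ω ∂μ, ω ∈ s → μ[f | m] ω ≤
      ‖u ω‖ ^ 2 - 2 * t * ⟪u ω, μ[g | m] ω⟫ + t ^ 2 * μ[(fun ω => ‖g ω‖ ^ 2) | m] ω := by
  filter_upwards [ae_condExp_le_condExp_of_le_on hm hs
      (integrable_norm_sub_smul_sq (hu.mono hm).aestronglyMeasurable hu_bdd hg t) hf0 hf,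
    condExp_norm_sub_smul_sq hm hu hu_bdd hg t] with ω hle heq hω
  exact heq ▸ hle hω

end CondExp

theorem sgm_one_step_conditional_estimate_general
    {Ω : Type*} {mF : MeasurableSpace Ω} (μ : Measure Ω) [IsProbabilityMeasure μ]
    (mG : MeasurableSpace Ω) (hG : mG ≤ mF)
    {X : Type*} [NormedAddCommGroup X] [InnerProductSpace ℝ X] [CompleteSpace X]
    (Xad : Set X)
    (proj : X → X)
    (hproj_char : ∀ z : X, ∀ w ∈ Xad, ⟪z - proj z, w - proj z⟫ ≤ 0)
    (j : X → ℝ) (gradj : X → X)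
    (hconvex : ∀ h₁ ∈ Xad, ∀ h₂ ∈ Xad, j h₂ ≥ j h₁ + ⟪gradj h₁, h₂ - h₁⟫)
    (h : Ω → X) (hmeas : StronglyMeasurable[mG] h) (hval : ∀ ω, h ω ∈ Xad)
    (hstar : X) (hstar_mem : hstar ∈ Xad)
    (t : ℝ) (ht : 0 ≤ t)
    (g : Ω → X) (hg : MemLp g 2 μ)
    (b : Ω → X)
    (K : ℝ) (hK : ∀ᵐ ω ∂μ, ‖b ω‖ ≤ K)
    (hcond : μ[g | mG] =ᵐ[μ] fun ω => gradj (h ω) + b ω)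
    (M : ℝ) (hM : μ[(fun ω => ‖g ω‖ ^ 2) | mG] ≤ᵐ[μ] fun _ => M) :
    μ[(fun ω => ‖proj (h ω - t • g ω) - hstar‖ ^ 2) | mG]
      ≤ᵐ[μ] fun ω =>
        ‖h ω - hstar‖ ^ 2 - 2 * t * (j (h ω) - j hstar)
          + 2 * t * K * ‖h ω - hstar‖ + t ^ 2 * M := by
  set v : Ω → X := fun ω => h ω - hstar
  have hv : StronglyMeasurable[mG] v := hmeas.sub stronglyMeasurable_const
  set S : ℕ → Set Ω := fun n => {ω | ‖v ω‖ ≤ n}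
  have hS : ∀ n, MeasurableSet[mG] (S n) := fun n =>
    measurableSet_le hv.norm.measurable measurable_const
  suffices ∀ n : ℕ, ∀ᵐ ω ∂μ, ω ∈ S n → μ[(fun ω => ‖proj (h ω - t • g ω) - hstar‖ ^ 2) | mG] ω ≤
      ‖v ω‖ ^ 2 - 2 * t * (j (h ω) - j hstar) + 2 * t * K * ‖v ω‖ + t ^ 2 * M by
    filter_upwards [ae_all_iff.2 this] with ω hω
    exact hω ⌈‖v ω‖⌉₊ (show ‖v ω‖ ≤ _ from Nat.le_ceil _)
  intro n
  have hu_bdd (ω : Ω) : ‖(S n).indicator v ω‖ ≤ n := by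
    rw [norm_indicator_eq_indicator_norm]
    exact Set.indicator_le' (fun _ hω => hω) (fun _ _ => n.cast_nonneg) ω
  have hproj_le : ∀ ω ∈ S n,
      ‖proj (h ω - t • g ω) - hstar‖ ^ 2 ≤ ‖(S n).indicator v ω - t • g ω‖ ^ 2 := fun ω hω => by
    simpa [v, Set.indicator_of_mem hω, sub_right_comm] using
      norm_sub_sq_le_of_inner_sub_nonpos (hproj_char (h ω - t • g ω) hstar hstar_mem)
  filter_upwards [ae_condExp_le_of_le_norm_sub_smul_sq hG (hS n) (hv.indicator (hS n)) hu_bdd hg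
      t (fun ω _ => sq_nonneg _) hproj_le, hcond, hK, hM] with ω hle hcondω hKω hMω hω
  have hgap : j (h ω) - j hstar ≤ ⟪v ω, gradj (h ω)⟫ := by
    have := hconvex (h ω) (hval ω) hstar hstar_mem
    rw [← neg_sub, inner_neg_right, real_inner_comm] at this
    linarith
  have hdescent := sub_mul_norm_le_inner_add hgap hKω
  rw [Set.indicator_of_mem hω, hcondω] at hle
  nlinarith [hle hω, mul_le_mul_of_nonneg_left hMω (sq_nonneg t)]

/-- Key one-step conditional recursion estimate for the projected stochastic
gradient method: given a sub-σ-algebra `𝔊`, a `𝔊`-measurable iterate `h` with values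
in `X_ad`, a stationary point `h*`, a step size `t ≥ 0` and a square-integrable
stochastic gradient `g` with conditional expectation `∇j(h) + b` (bias `‖b‖ ≤ K` a.s.)
and conditional second moment `≤ M`, the projected step satisfies, almost surely,
`E[‖π(h − t g) − h*‖² | 𝔊] ≤ ‖h − h*‖² − 2t(j(h) − j(h*)) + 2tK‖h − h*‖ + t²M`. -/
theorem sgm_one_step_conditional_estimate
    {Ω : Type*} {mF : MeasurableSpace Ω} (μ : Measure Ω) [IsProbabilityMeasure μ]
    (mG : MeasurableSpace Ω) (hG : mG ≤ mF)
    {X : Type*} [NormedAddCommGroup X] [InnerProductSpace ℝ X] [CompleteSpace X]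
    [TopologicalSpace.SeparableSpace X]
    (Xad : Set X) (hne : Xad.Nonempty) (hclosed : IsClosed Xad) (hconv : Convex ℝ Xad)
    (proj : X → X)
    (hproj_mem : ∀ z : X, proj z ∈ Xad)
    (hproj_char : ∀ z : X, ∀ w ∈ Xad, ⟪z - proj z, w - proj z⟫ ≤ 0)
    (j : X → ℝ) (gradj : X → X)
    (hdiff : ∀ x : X, HasGradientAt j (gradj x) x)
    (hconvex : ∀ h₁ ∈ Xad, ∀ h₂ ∈ Xad, j h₂ ≥ j h₁ + ⟪gradj h₁, h₂ - h₁⟫)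
    (h : Ω → X) (hmeas : StronglyMeasurable[mG] h) (hval : ∀ ω, h ω ∈ Xad)
    (hstar : X) (hstar_mem : hstar ∈ Xad)
    (hVI : ∀ w ∈ Xad, ⟪gradj hstar, w - hstar⟫ ≥ 0)
    (t : ℝ) (ht : 0 ≤ t)
    (g : Ω → X) (hg : MemLp g 2 μ)
    (b : Ω → X) (hb : StronglyMeasurable[mG] b)
    (K : ℝ) (hK : ∀ᵐ ω ∂μ, ‖b ω‖ ≤ K)
    (hcond : μ[g | mG] =ᵐ[μ] fun ω => gradj (h ω) + b ω)
    (M : ℝ) (hM : μ[(fun ω => ‖g ω‖ ^ 2) | mG] ≤ᵐ[μ] fun _ => M) :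
    μ[(fun ω => ‖proj (h ω - t • g ω) - hstar‖ ^ 2) | mG]
      ≤ᵐ[μ] fun ω =>
        ‖h ω - hstar‖ ^ 2 - 2 * t * (j (h ω) - j hstar)
          + 2 * t * K * ‖h ω - hstar‖ + t ^ 2 * M :=
  sgm_one_step_conditional_estimate_general μ mG hG Xad proj hproj_char j gradj hconvex h hmeas hval
    hstar hstar_mem t ht g hg b K hK hcond M hM
end

section
/- (Robbins–Siegmund) Let (Ω, 𝔉, ℙ) be a probability space with a filtration (𝔉_n)_{n ≥ 1}, and let (v_n), (a_n), (b_n), (c_n) be sequences of nonnegative, integrable, real-valued random variables adapted to (𝔉_n) (i.e., each of v_n, a_n, b_n, c_n is 𝔉_n-measurable). Assume that for every n, E[v_{n+1} | 𝔉_n] ≤ v_n·(1 + a_n) + b_n − c_n almost surely, and that Σ_{n=1}^∞ a_n < ∞ and Σ_{n=1}^∞ b_n < ∞ almost surely. Then, almost surely, the sequence (v_n) converges to a finite limit and Σ_{n=1}^∞ c_n < ∞. -/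
/-!
Dividing by the discount factor `P n = ∏ k < n, (1 + a k)`, which is predictable, at least `1` and
convergent where `∑ a n < ∞`, reduces the recursion to the case `a = 0`. There
`X n = v n + ∑ k < n, (c k - b k)` is a supermartingale with `X n ≥ -∑ k < n, b k`. Stopped just
before the partial sums of `b` exceed a level `M`, it is a supermartingale bounded below by `-M`,
hence converges a.s.; on the event `∑ b ≤ M` it is never stopped. Convergence of `X` and of the
partial sums of `b` gives convergence of `v / P` and summability of `c / P`, and multiplying back by
the convergent `P` finishes the proof.
-/

open MeasureTheory Filter Finset Topology

theorem Summable.of_div_of_le {c p : ℕ → ℝ} {L : ℝ} (hc : ∀ n, 0 ≤ c n) (hp : ∀ n, 0 < p n)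
    (hpL : ∀ n, p n ≤ L) (h : Summable fun n => c n / p n) : Summable c :=
  (h.mul_right L).of_nonneg_of_le hc fun n =>
    calc c n = c n / p n * p n := (div_mul_cancel₀ _ (hp n).ne').symm
      _ ≤ c n / p n * L := mul_le_mul_of_nonneg_left (hpL n) (div_nonneg (hc n) (hp n).le)

section prodOneAdd

variable {Ω : Type*} (a : ℕ → Ω → ℝ)

def prodOneAdd (n : ℕ) (ω : Ω) : ℝ := ∏ k ∈ range n, (1 + a k ω)

variable {a}

theorem prodOneAdd_succ (n : ℕ) (ω : Ω) :
    prodOneAdd a (n + 1) ω = prodOneAdd a n ω * (1 + a n ω) :=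
  prod_range_succ _ _

theorem one_le_prodOneAdd {ω : Ω} (ha : ∀ k, 0 ≤ a k ω) (n : ℕ) : 1 ≤ prodOneAdd a n ω :=
  one_le_prod fun k _ => le_add_of_nonneg_right (ha k)

theorem prodOneAdd_pos {ω : Ω} (ha : ∀ k, 0 ≤ a k ω) (n : ℕ) : 0 < prodOneAdd a n ω :=
  zero_lt_one.trans_le (one_le_prodOneAdd ha n)

theorem monotone_prodOneAdd {ω : Ω} (ha : ∀ k, 0 ≤ a k ω) : Monotone (prodOneAdd a · ω) :=
  monotone_nat_of_le_succ fun n => by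
    rw [prodOneAdd_succ]
    exact le_mul_of_one_le_right (prodOneAdd_pos ha n).le (le_add_of_nonneg_right (ha n))

theorem tendsto_prodOneAdd {ω : Ω} (ha : Summable (a · ω)) :
    Tendsto (prodOneAdd a · ω) atTop (𝓝 (∏' k, (1 + a k ω))) :=
  (Real.multipliable_one_add_of_summable ha).tendsto_prod_tprod_nat

end prodOneAdd

namespace MeasureTheory

variable {Ω : Type*} {m0 : MeasurableSpace Ω} {μ : Measure Ω} {ℱ : Filtration ℕ m0}

theorem Adapted.measurable_sum_range {β : ℕ → Ω → ℝ} (hβ : Adapted ℱ β) {m n : ℕ}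
    (hnm : n ≤ m + 1) : Measurable[ℱ m] fun ω => ∑ k ∈ range n, β k ω :=
  Finset.measurable_sum _ fun k hk =>
    (hβ k).mono (ℱ.mono (by have := mem_range.1 hk; omega)) le_rfl

theorem Adapted.measurable_prodOneAdd {a : ℕ → Ω → ℝ} (ha : Adapted ℱ a) {m n : ℕ}
    (hnm : n ≤ m + 1) : Measurable[ℱ m] (prodOneAdd a n) :=
  Finset.measurable_prod _ fun k hk =>
    measurable_const.add ((ha k).mono (ℱ.mono (by have := mem_range.1 hk; omega)) le_rfl)

theorem Supermartingale.exists_ae_tendsto_of_forall_le [IsFiniteMeasure μ] {f : ℕ → Ω → ℝ}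
    (hf : Supermartingale f ℱ μ) {R : ℝ} (hR : ∀ n ω, R ≤ f n ω) :
    ∀ᵐ ω ∂μ, ∃ l, Tendsto (fun n => f n ω) atTop (𝓝 l) := by
  have hbdd : ∀ n,
      eLpNorm ((-f) n) 1 μ ≤ (∫ ω, f 0 ω ∂μ + 2 * |R| * μ.real Set.univ).toNNReal := by
    intro n
    rw [Pi.neg_apply, eLpNorm_neg, eLpNorm_one_eq_lintegral_enorm,
      ← ofReal_integral_norm_eq_lintegral_enorm (hf.integrable n)]
    refine ENNReal.ofReal_le_ofReal ?_
    have hnorm : ∀ ω, ‖f n ω‖ ≤ f n ω + 2 * |R| := fun ω => by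
      rw [Real.norm_eq_abs, abs_le]
      constructor <;> linarith [hR n ω, neg_abs_le R, le_abs_self R]
    have hint : ∫ ω, f n ω ∂μ ≤ ∫ ω, f 0 ω ∂μ := by
      simpa using hf.setIntegral_le (Nat.zero_le n) MeasurableSet.univ
    calc ∫ ω, ‖f n ω‖ ∂μ ≤ ∫ ω, (f n ω + 2 * |R|) ∂μ :=
          integral_mono (hf.integrable n).norm ((hf.integrable n).add (integrable_const _)) hnorm
      _ = ∫ ω, f n ω ∂μ + 2 * |R| * μ.real Set.univ := by
          rw [integral_add (hf.integrable n) (integrable_const _), integral_const, smul_eq_mul,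
            mul_comm]
      _ ≤ ∫ ω, f 0 ω ∂μ + 2 * |R| * μ.real Set.univ := by linarith
  filter_upwards [hf.neg.exists_ae_tendsto_of_bdd hbdd] with ω ⟨l, hl⟩
  exact ⟨-l, by simpa using hl.neg⟩

theorem Supermartingale.ae_exists_tendsto_of_bddAbove_sum [IsFiniteMeasure μ]
    {X β : ℕ → Ω → ℝ} (hX : Supermartingale X ℱ μ) (hβ : Adapted ℱ β)
    (hlb : ∀ n ω, -∑ k ∈ range n, β k ω ≤ X n ω) :
    ∀ᵐ ω ∂μ, BddAbove (Set.range fun n => ∑ k ∈ range n, β k ω) →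
      ∃ l, Tendsto (fun n => X n ω) atTop (𝓝 l) := by
  suffices h : ∀ M : ℕ, ∀ᵐ ω ∂μ, (∀ n, ∑ k ∈ range n, β k ω ≤ M) →
      ∃ l, Tendsto (fun n => X n ω) atTop (𝓝 l) by
    filter_upwards [ae_all_iff.2 h] with ω hω ⟨B, hB⟩
    exact hω ⌈B⌉₊ fun n => (hB ⟨n, rfl⟩).trans (Nat.le_ceil B)
  intro M
  -- stop just before the partial sums of `β` exceed `M`; this is a stopping time since the
  -- `n + 1`-st partial sum is already `ℱ n`-measurable
  set τ := hittingAfter (fun n ω => ∑ k ∈ range (n + 1), β k ω) (Set.Ioi (M : ℝ)) 0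
  have hτ : IsStoppingTime ℱ τ :=
    Adapted.isStoppingTime_hittingAfter (fun n => hβ.measurable_sum_range le_rfl) measurableSet_Ioi
  have hY : Supermartingale (stoppedProcess X τ) ℱ μ := by
    simpa using (hX.neg.stoppedProcess hτ).neg
  have hsum_le : ∀ (k : ℕ) ω, (k : WithTop ℕ) ≤ τ ω → ∑ i ∈ range k, β i ω ≤ M := by
    rintro (_ | j) ω hk
    · simp
    · simpa using notMem_of_lt_hittingAfter
        (lt_of_lt_of_le (WithTop.coe_lt_coe.2 j.lt_succ_self) hk) (Nat.zero_le j)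
  have hYlb : ∀ n ω, -(M : ℝ) ≤ stoppedProcess X τ n ω := by
    intro n ω
    rcases le_total (n : WithTop ℕ) (τ ω) with h | h
    · rw [stoppedProcess_eq_of_le (u := X) (i := n) h]
      linarith [hlb n ω, hsum_le n ω h]
    · obtain ⟨t, ht⟩ := WithTop.ne_top_iff_exists.1 (ne_top_of_le_ne_top WithTop.coe_ne_top h)
      rw [stoppedProcess_eq_of_ge (u := X) (i := n) h, ← ht]
      change -(M : ℝ) ≤ X t ω
      linarith [hlb t ω, hsum_le t ω ht.le]
  filter_upwards [hY.exists_ae_tendsto_of_forall_le hYlb] with ω ⟨l, hl⟩ hω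
  have hτω : τ ω = ⊤ := hittingAfter_eq_top_iff.2 fun j _ => not_lt.2 (hω (j + 1))
  exact ⟨l, hl.congr fun n => stoppedProcess_eq_of_le (hτω ▸ le_top)⟩

theorem supermartingale_add_sum_of_condExp_le [IsFiniteMeasure μ] {u β γ : ℕ → Ω → ℝ}
    (hu : Adapted ℱ u) (hβ : Adapted ℱ β) (hγ : Adapted ℱ γ)
    (hu_int : ∀ n, Integrable (u n) μ) (hβ_int : ∀ n, Integrable (β n) μ)
    (hγ_int : ∀ n, Integrable (γ n) μ)
    (hstep : ∀ n, μ[u (n + 1)|ℱ n] ≤ᵐ[μ] fun ω => u n ω + β n ω - γ n ω) :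
    Supermartingale (fun n ω => u n ω + ∑ k ∈ range n, (γ k ω - β k ω)) ℱ μ := by
  have hδ : Adapted ℱ fun n ω => γ n ω - β n ω := fun n => (hγ n).sub (hβ n)
  have hδ_int : ∀ n, Integrable (fun ω => ∑ k ∈ range n, (γ k ω - β k ω)) μ := fun n =>
    integrable_finsetSum _ fun k _ => (hγ_int k).sub (hβ_int k)
  refine supermartingale_nat
    (fun n => ((hu n).add (hδ.measurable_sum_range n.le_succ)).stronglyMeasurable)
    (fun n => (hu_int n).add (hδ_int n)) fun n => ?_
  have hsplit : μ[fun ω => u (n + 1) ω + ∑ k ∈ range (n + 1), (γ k ω - β k ω)|ℱ n] =ᵐ[μ]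
      μ[u (n + 1)|ℱ n] + fun ω => ∑ k ∈ range (n + 1), (γ k ω - β k ω) := by
    refine (condExp_add (hu_int (n + 1)) (hδ_int (n + 1)) _).trans ?_
    rw [condExp_of_stronglyMeasurable (ℱ.le n)
      (hδ.measurable_sum_range le_rfl).stronglyMeasurable (hδ_int (n + 1))]
  filter_upwards [hsplit, hstep n] with ω hsplit hstep
  rw [hsplit, Pi.add_apply, sum_range_succ]
  linarith

theorem ae_exists_tendsto_and_summable_of_condExp_le [IsFiniteMeasure μ] {u β γ : ℕ → Ω → ℝ}
    (hu_nonneg : ∀ n ω, 0 ≤ u n ω) (hγ_nonneg : ∀ n ω, 0 ≤ γ n ω)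
    (hu : Adapted ℱ u) (hβ : Adapted ℱ β) (hγ : Adapted ℱ γ)
    (hu_int : ∀ n, Integrable (u n) μ) (hβ_int : ∀ n, Integrable (β n) μ)
    (hγ_int : ∀ n, Integrable (γ n) μ)
    (hstep : ∀ n, μ[u (n + 1)|ℱ n] ≤ᵐ[μ] fun ω => u n ω + β n ω - γ n ω) :
    ∀ᵐ ω ∂μ, Summable (β · ω) →
      (∃ l, Tendsto (u · ω) atTop (𝓝 l)) ∧ Summable (γ · ω) := by
  set X := fun n ω => u n ω + ∑ k ∈ range n, (γ k ω - β k ω)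
  have hX : Supermartingale X ℱ μ :=
    supermartingale_add_sum_of_condExp_le hu hβ hγ hu_int hβ_int hγ_int hstep
  have hXlb : ∀ n ω, -∑ k ∈ range n, β k ω ≤ X n ω := fun n ω => by
    have := sum_nonneg fun k (_ : k ∈ range n) => hγ_nonneg k ω
    simp only [X, sum_sub_distrib]
    linarith [hu_nonneg n ω]
  filter_upwards [hX.ae_exists_tendsto_of_bddAbove_sum hβ hXlb] with ω hω hβω
  have hβsum := hβω.hasSum.tendsto_sum_nat
  obtain ⟨l, hl⟩ := hω hβsum.bddAbove_range
  obtain ⟨C, hC⟩ := (hl.add hβsum).bddAbove_range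
  have hγω : Summable (γ · ω) := by
    refine summable_of_sum_range_le (hγ_nonneg · ω) fun n => le_trans ?_ (hC ⟨n, rfl⟩)
    simp only [X, sum_sub_distrib]
    linarith [hu_nonneg n ω]
  refine ⟨⟨_, ((hl.sub hγω.hasSum.tendsto_sum_nat).add hβsum).congr fun n => ?_⟩, hγω⟩
  simp only [X, sum_sub_distrib]
  ring

theorem condExp_mul_le_mul_of_stronglyMeasurable_left {m : MeasurableSpace Ω} {f g h : Ω → ℝ}
    (hh : StronglyMeasurable[m] h) (hh_nonneg : 0 ≤ h) (hhf : Integrable (h * f) μ)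
    (hf : Integrable f μ) (hfg : μ[f|m] ≤ᵐ[μ] g) : μ[h * f|m] ≤ᵐ[μ] h * g := by
  filter_upwards [condExp_mul_of_stronglyMeasurable_left hh hhf hf, hfg] with ω hω hfgω
  rw [hω, Pi.mul_apply, Pi.mul_apply]
  exact mul_le_mul_of_nonneg_left hfgω (hh_nonneg ω)

theorem Integrable.div_of_one_le {f g : Ω → ℝ} (hf : Integrable f μ) (hg : AEMeasurable g μ)
    (hg_one : ∀ ω, 1 ≤ g ω) : Integrable (fun ω => f ω / g ω) μ := by
  refine hf.mono (hf.aemeasurable.div hg).aestronglyMeasurable (ae_of_all _ fun ω => ?_)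
  rw [Real.norm_eq_abs, Real.norm_eq_abs, abs_div]
  exact div_le_self (abs_nonneg _) ((hg_one ω).trans (le_abs_self _))

theorem condExp_div_prodOneAdd_le {v a b c : ℕ → Ω → ℝ} (ha_nonneg : ∀ n ω, 0 ≤ a n ω)
    (ha : Adapted ℱ a) {n : ℕ} (hv_int : Integrable (v (n + 1)) μ)
    (hrec : μ[v (n + 1)|ℱ n] ≤ᵐ[μ] fun ω => v n ω * (1 + a n ω) + b n ω - c n ω) :
    μ[fun ω => v (n + 1) ω / prodOneAdd a (n + 1) ω|ℱ n] ≤ᵐ[μ] fun ω =>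
      v n ω / prodOneAdd a n ω + b n ω / prodOneAdd a (n + 1) ω
        - c n ω / prodOneAdd a (n + 1) ω := by
  have hP := ha.measurable_prodOneAdd (le_refl (n + 1))
  have hP_one : ∀ ω, 1 ≤ prodOneAdd a (n + 1) ω := fun ω => one_le_prodOneAdd (ha_nonneg · ω) _
  have hdiv : (fun ω => v (n + 1) ω / prodOneAdd a (n + 1) ω)
      = (fun ω => (prodOneAdd a (n + 1) ω)⁻¹) * v (n + 1) := by
    ext ω
    exact div_eq_inv_mul _ _
  have hint := hv_int.div_of_one_le (hP.mono (ℱ.le n) le_rfl).aemeasurable hP_one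
  rw [hdiv] at hint ⊢
  refine (condExp_mul_le_mul_of_stronglyMeasurable_left hP.inv.stronglyMeasurable
    (fun ω => inv_nonneg.2 (prodOneAdd_pos (ha_nonneg · ω) _).le) hint hv_int hrec).trans_eq
    (ae_of_all _ fun ω => ?_)
  have hPn : prodOneAdd a n ω ≠ 0 := (prodOneAdd_pos (ha_nonneg · ω) n).ne'
  have ha1 : 1 + a n ω ≠ 0 := by linarith [ha_nonneg n ω]
  simp only [Pi.mul_apply, Pi.inv_apply, prodOneAdd_succ]
  field_simp

end MeasureTheory

theorem robbins_siegmund_general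
    {Ω : Type*} {mF : MeasurableSpace Ω} (μ : Measure Ω) [IsProbabilityMeasure μ]
    (ℱ : Filtration ℕ mF)
    (v a b c : ℕ → Ω → ℝ)
    (hv_nonneg : ∀ n ω, 0 ≤ v n ω) (ha_nonneg : ∀ n ω, 0 ≤ a n ω)
    (hb_nonneg : ∀ n ω, 0 ≤ b n ω) (hc_nonneg : ∀ n ω, 0 ≤ c n ω)
    (hv_int : ∀ n, Integrable (v n) μ)
    (hb_int : ∀ n, Integrable (b n) μ) (hc_int : ∀ n, Integrable (c n) μ)
    (hv_adapted : Adapted ℱ v) (ha_adapted : Adapted ℱ a)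
    (hb_adapted : Adapted ℱ b) (hc_adapted : Adapted ℱ c)
    (hrec : ∀ n, μ[v (n + 1) | ℱ n]
        ≤ᵐ[μ] fun ω => v n ω * (1 + a n ω) + b n ω - c n ω)
    (ha_sum : ∀ᵐ ω ∂μ, Summable fun n => a n ω)
    (hb_sum : ∀ᵐ ω ∂μ, Summable fun n => b n ω) :
    ∀ᵐ ω ∂μ, (∃ l : ℝ, Tendsto (fun n => v n ω) atTop (nhds l)) ∧
      Summable fun n => c n ω := by
  set P := prodOneAdd a
  have hP_one : ∀ n ω, 1 ≤ P n ω := fun n ω => one_le_prodOneAdd (ha_nonneg · ω) n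
  have hP_pos : ∀ n ω, 0 < P n ω := fun n ω => prodOneAdd_pos (ha_nonneg · ω) n
  have hP : ∀ {m n}, n ≤ m + 1 → Measurable[ℱ m] (P n) := ha_adapted.measurable_prodOneAdd
  have hdiv_int : ∀ {f : Ω → ℝ} (n : ℕ), Integrable f μ → Integrable (fun ω => f ω / P n ω) μ :=
    fun n hf => hf.div_of_one_le ((hP n.le_succ).mono (ℱ.le n) le_rfl).aemeasurable (hP_one n)
  have hrescaled := ae_exists_tendsto_and_summable_of_condExp_le (μ := μ) (ℱ := ℱ)
    (u := fun n ω => v n ω / P n ω) (β := fun n ω => b n ω / P (n + 1) ω)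
    (γ := fun n ω => c n ω / P (n + 1) ω)
    (fun n ω => div_nonneg (hv_nonneg n ω) (hP_pos n ω).le)
    (fun n ω => div_nonneg (hc_nonneg n ω) (hP_pos _ ω).le)
    (fun n => (hv_adapted n).div (hP n.le_succ)) (fun n => (hb_adapted n).div (hP le_rfl))
    (fun n => (hc_adapted n).div (hP le_rfl))
    (fun n => hdiv_int n (hv_int n)) (fun n => hdiv_int _ (hb_int n))
    (fun n => hdiv_int _ (hc_int n))
    (fun n => condExp_div_prodOneAdd_le ha_nonneg ha_adapted (hv_int (n + 1)) (hrec n))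
  filter_upwards [hrescaled, ha_sum, hb_sum] with ω hω haω hbω
  have hP_lim := tendsto_prodOneAdd haω
  have hP_le := (monotone_prodOneAdd (ha_nonneg · ω)).ge_of_tendsto hP_lim
  obtain ⟨⟨l, hl⟩, hc⟩ := hω <| hbω.of_nonneg_of_le
    (fun n => div_nonneg (hb_nonneg n ω) (hP_pos _ ω).le)
    fun n => div_le_self (hb_nonneg n ω) (hP_one _ ω)
  refine ⟨⟨_, (hl.mul hP_lim).congr fun n => div_mul_cancel₀ _ (hP_pos n ω).ne'⟩, ?_⟩
  exact hc.of_div_of_le (hc_nonneg · ω) (fun n => hP_pos (n + 1) ω) fun n => hP_le (n + 1)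

/-- Robbins–Siegmund lemma: if `(v_n), (a_n), (b_n), (c_n)` are nonnegative,
integrable, adapted real random sequences with
`E[v_{n+1} | 𝔉_n] ≤ v_n (1 + a_n) + b_n − c_n` a.s. and `Σ a_n < ∞`, `Σ b_n < ∞` a.s.,
then a.s. `(v_n)` converges to a finite limit and `Σ c_n < ∞`. -/
theorem robbins_siegmund
    {Ω : Type*} {mF : MeasurableSpace Ω} (μ : Measure Ω) [IsProbabilityMeasure μ]
    (ℱ : Filtration ℕ mF)
    (v a b c : ℕ → Ω → ℝ)
    (hv_nonneg : ∀ n ω, 0 ≤ v n ω) (ha_nonneg : ∀ n ω, 0 ≤ a n ω)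
    (hb_nonneg : ∀ n ω, 0 ≤ b n ω) (hc_nonneg : ∀ n ω, 0 ≤ c n ω)
    (hv_int : ∀ n, Integrable (v n) μ) (ha_int : ∀ n, Integrable (a n) μ)
    (hb_int : ∀ n, Integrable (b n) μ) (hc_int : ∀ n, Integrable (c n) μ)
    (hv_adapted : Adapted ℱ v) (ha_adapted : Adapted ℱ a)
    (hb_adapted : Adapted ℱ b) (hc_adapted : Adapted ℱ c)
    (hrec : ∀ n, μ[v (n + 1) | ℱ n]
        ≤ᵐ[μ] fun ω => v n ω * (1 + a n ω) + b n ω - c n ω)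
    (ha_sum : ∀ᵐ ω ∂μ, Summable fun n => a n ω)
    (hb_sum : ∀ᵐ ω ∂μ, Summable fun n => b n ω) :
    ∀ᵐ ω ∂μ, (∃ l : ℝ, Tendsto (fun n => v n ω) atTop (nhds l)) ∧
      Summable fun n => c n ω :=
  robbins_siegmund_general μ ℱ v a b c hv_nonneg ha_nonneg hb_nonneg hc_nonneg hv_int hb_int hc_int
    hv_adapted ha_adapted hb_adapted hc_adapted hrec ha_sum hb_sum
end

section
/- Let (Ω, 𝔉, ℙ) be a probability space with a filtration (𝔉_n)_{n ≥ 1}. Let (τ_n) be a sequence of nonnegative real numbers with Σ_{n=1}^∞ τ_n = ∞, and let (β_n) be a sequence of nonnegative, integrable, real-valued random variables adapted to (𝔉_n). Assume E[ Σ_{n=1}^∞ τ_n·β_n ] < ∞, and that there exists γ > 0 such that for every n, β_n − E[β_{n+1} | 𝔉_n] ≤ γ·τ_n almost surely. Then β_n → 0 almost surely as n → ∞. -/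
/-!
Write `T n = ∑_{k ≥ n} τ k β k`. Iterating the drift bound gives
`E[β (n+k) | ℱ n] ≥ β n - γ (τ n + ⋯ + τ (n+k-1))`; summing these against `τ (n+k)` up to the first
`K` at which the `τ`-mass reaches `ε / γ` (it does, as `∑ τ = ∞`) and comparing with
`E[T n | ℱ n]` yields `β n ≤ ε + (γ / ε) E[T n | ℱ n]`. Since `T` decreases to `0` and is
integrable, `E[T n | ℱ n] ≤ E[T m | ℱ n] → T m` for `n ≥ m` by Lévy's upward theorem, so
`E[T n | ℱ n] → 0` a.s.; letting `ε → 0` gives `β n → 0`.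
-/

open MeasureTheory Filter Finset
open scoped Topology ENNReal

theorem antitone_tsum_nat_add {a : ℕ → ℝ} (ha : ∀ k, 0 ≤ a k) :
    Antitone fun n => ∑' k, a (k + n) := by
  refine antitone_nat_of_succ_le fun n => ?_
  by_cases hs : Summable a
  · have hn : Summable fun k => a (k + n) := (summable_nat_add_iff n).2 hs
    rw [hn.tsum_eq_zero_add]
    simp only [zero_add, add_right_comm _ 1 n]
    exact le_add_of_nonneg_left (ha n)
  · rw [tsum_eq_zero_of_not_summable, tsum_eq_zero_of_not_summable] <;>
      rwa [summable_nat_add_iff]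

theorem le_add_div_mul_of_drift {w c : ℕ → ℝ} {a G γ ε : ℝ} (hw : ∀ k, 0 ≤ w k)
    (hw_div : ¬Summable w) (hγ : 0 < γ) (hε : 0 < ε)
    (hc : ∀ k, a - γ * ∑ j ∈ range k, w j ≤ c k) (hG : ∀ K, ∑ k ∈ range K, w k * c k ≤ G) :
    a ≤ ε + γ / ε * G := by
  have hG0 : 0 ≤ G := by simpa using hG 0
  rcases le_or_gt a ε with ha | ha
  · have : 0 ≤ γ / ε * G := by positivity
    linarith
  classical
  have hex : ∃ K, ε / γ ≤ ∑ j ∈ range K, w j :=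
    (((not_summable_iff_tendsto_nat_atTop_of_nonneg hw).1 hw_div).eventually_ge_atTop _).exists
  set K := Nat.find hex
  have hc_K : ∀ k < K, a - ε ≤ c k := fun k hk => by
    have hlt : ∑ j ∈ range k, w j < ε / γ := not_le.1 (Nat.find_min hex hk)
    have : γ * ∑ j ∈ range k, w j < ε := by rwa [lt_div_iff₀' hγ] at hlt
    linarith [hc k]
  have hG_ge : ε / γ * (a - ε) ≤ G :=
    calc ε / γ * (a - ε) ≤ (∑ k ∈ range K, w k) * (a - ε) :=
          mul_le_mul_of_nonneg_right (Nat.find_spec hex) (sub_nonneg.2 ha.le)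
      _ = ∑ k ∈ range K, w k * (a - ε) := sum_mul _ _ _
      _ ≤ ∑ k ∈ range K, w k * c k :=
          sum_le_sum fun k hk => mul_le_mul_of_nonneg_left (hc_K k (mem_range.1 hk)) (hw k)
      _ ≤ G := hG K
  have : a - ε ≤ γ / ε * G := by
    calc a - ε = γ / ε * (ε / γ * (a - ε)) := by field_simp
      _ ≤ γ / ε * G := mul_le_mul_of_nonneg_left hG_ge (by positivity)
  linarith

theorem tendsto_zero_of_le_add_mul {b G ε C : ℕ → ℝ} (hb : ∀ n, 0 ≤ b n)
    (hG : Tendsto G atTop (𝓝 0)) (hε : Tendsto ε atTop (𝓝 0))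
    (hle : ∀ j n, b n ≤ ε j + C j * G n) : Tendsto b atTop (𝓝 0) := by
  refine tendsto_order.2 ⟨fun a ha => Eventually.of_forall fun n => ha.trans_le (hb n),
    fun a ha => ?_⟩
  obtain ⟨j, hj⟩ := (hε.eventually_lt_const (half_pos ha)).exists
  have hCG : Tendsto (fun n => C j * G n) atTop (𝓝 0) := by simpa using hG.const_mul (C j)
  filter_upwards [hCG.eventually_lt_const (half_pos ha)] with n hn
  linarith [hle j n]

section Tail

variable {Ω : Type*}

-- Where the series diverges, `tsum` makes this `0` for every `n`.
noncomputable def tailSum (f : ℕ → Ω → ℝ) (n : ℕ) (ω : Ω) : ℝ := ∑' k, f (k + n) ω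

variable {f : ℕ → Ω → ℝ}

theorem stronglyMeasurable_tailSum {m : MeasurableSpace Ω} (hf : ∀ k, StronglyMeasurable[m] (f k))
    (n : ℕ) : StronglyMeasurable[m] (tailSum f n) :=
  (Measurable.tsum fun k => (hf (k + n)).measurable).stronglyMeasurable

theorem sum_range_le_tailSum (hf : ∀ k ω, 0 ≤ f k ω) {ω : Ω} (hs : Summable fun k => f k ω)
    (n K : ℕ) : ∑ k ∈ range K, f (k + n) ω ≤ tailSum f n ω :=
  ((summable_nat_add_iff n).2 hs).sum_le_tsum _ fun _ _ => hf _ _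

variable [MeasurableSpace Ω] {μ : Measure Ω}

theorem ae_summable_of_lintegral_tsum_lt_top (hf : ∀ k ω, 0 ≤ f k ω)
    (hf_meas : ∀ k, Measurable (f k)) (hsum : ∫⁻ ω, ∑' k, ENNReal.ofReal (f k ω) ∂μ < ∞) :
    ∀ᵐ ω ∂μ, Summable fun k => f k ω := by
  filter_upwards [ae_lt_top (Measurable.tsum fun k => (hf_meas k).ennreal_ofReal) hsum.ne]
    with ω hω
  simpa only [ENNReal.toReal_ofReal (hf _ ω)] using ENNReal.summable_toReal hω.ne

theorem integrable_tailSum (hf : ∀ k ω, 0 ≤ f k ω) (hf_meas : ∀ k, Measurable (f k))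
    (hsum : ∫⁻ ω, ∑' k, ENNReal.ofReal (f k ω) ∂μ < ∞) (n : ℕ) :
    Integrable (tailSum f n) μ := by
  refine ⟨(Measurable.tsum fun k => hf_meas (k + n)).aestronglyMeasurable,
    (lintegral_mono fun ω => ?_).trans_lt hsum⟩
  have h_le : tailSum f n ω ≤ ∑' k, f k ω := by
    simpa [tailSum] using antitone_tsum_nat_add (fun k => hf k ω) (Nat.zero_le n)
  have h0 : 0 ≤ tailSum f n ω := tsum_nonneg fun k => hf _ ω
  rw [Real.enorm_eq_ofReal h0]
  by_cases hs : Summable fun k => f k ω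
  · exact (ENNReal.ofReal_le_ofReal h_le).trans
      (ENNReal.ofReal_tsum_of_nonneg (fun k => hf k ω) hs).le
  · simp [tailSum, tsum_eq_zero_of_not_summable ((summable_nat_add_iff n).not.2 hs)]

end Tail

section Conditional

variable {Ω : Type*} {m0 : MeasurableSpace Ω} {μ : Measure Ω}

theorem sum_smul_condExp_le_condExp {ι : Type*} {m : MeasurableSpace Ω} {s : Finset ι}
    {w : ι → ℝ} {f : ι → Ω → ℝ} {g : Ω → ℝ} (hf : ∀ i ∈ s, Integrable (f i) μ)
    (hg : Integrable g μ) (hle : ∑ i ∈ s, w i • f i ≤ᵐ[μ] g) :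
    ∑ i ∈ s, w i • μ[f i|m] ≤ᵐ[μ] μ[g|m] := by
  have hwf : ∀ i ∈ s, Integrable (w i • f i) μ := fun i hi => (hf i hi).smul (w i)
  filter_upwards [condExp_finsetSum hwf m, (eventually_all_finset s).2 fun i _ =>
      condExp_smul (μ := μ) (w i) (f i) m,
    condExp_mono (m := m) (integrable_finsetSum' s hwf) hg hle] with ω h_sum h_smul h_mono
  refine le_of_eq_of_le ?_ h_mono
  rw [h_sum, Finset.sum_apply, Finset.sum_apply]
  exact sum_congr rfl fun i hi => (h_smul i hi).symm

variable [IsFiniteMeasure μ] {ℱ : Filtration ℕ m0}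

theorem ae_tendsto_condExp_of_antitone {T : ℕ → Ω → ℝ} (hT_int : ∀ n, Integrable (T n) μ)
    (hT_meas : ∀ n, StronglyMeasurable[⨆ k, ℱ k] (T n))
    (hT_anti : ∀ᵐ ω ∂μ, Antitone fun n => T n ω)
    (hT_lim : ∀ᵐ ω ∂μ, Tendsto (fun n => T n ω) atTop (𝓝 0)) :
    ∀ᵐ ω ∂μ, Tendsto (fun n => μ[T n|ℱ n] ω) atTop (𝓝 0) := by
  have h_nonneg : ∀ n, 0 ≤ᵐ[μ] μ[T n|ℱ n] := fun n => condExp_nonneg <| by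
    filter_upwards [hT_anti, hT_lim] with ω h_anti h_lim using h_anti.le_of_tendsto h_lim n
  have h_le : ∀ m n, m ≤ n → μ[T n|ℱ n] ≤ᵐ[μ] μ[T m|ℱ n] := fun m n hmn =>
    condExp_mono (hT_int n) (hT_int m) (hT_anti.mono fun ω h => h hmn)
  have h_levy : ∀ m, ∀ᵐ ω ∂μ, Tendsto (fun n => μ[T m|ℱ n] ω) atTop (𝓝 (T m ω)) :=
    fun m => (hT_int m).tendsto_ae_condExp (hT_meas m)
  filter_upwards [hT_lim, ae_all_iff.2 h_nonneg, ae_all_iff.2 h_levy,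
    ae_all_iff.2 fun m => ae_all_iff.2 fun n => eventually_imp_distrib_left.2 (h_le m n)]
    with ω h_lim h_nonneg h_levy h_le
  refine tendsto_order.2 ⟨fun a ha => Eventually.of_forall fun n => ha.trans_le (h_nonneg n),
    fun a ha => ?_⟩
  obtain ⟨m, hm⟩ := (h_lim.eventually_lt_const ha).exists
  filter_upwards [(h_levy m).eventually_lt_const hm, eventually_ge_atTop m] with n hn hmn
  exact (h_le m n hmn).trans_lt hn

theorem ae_sub_sum_le_condExp {β : ℕ → Ω → ℝ} {c : ℕ → ℝ} (hβ_int : ∀ n, Integrable (β n) μ)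
    (hβ_adapted : Adapted ℱ β)
    (hrec : ∀ n, ∀ᵐ ω ∂μ, β n ω - μ[β (n + 1)|ℱ n] ω ≤ c n) (n k : ℕ) :
    ∀ᵐ ω ∂μ, β n ω - ∑ j ∈ range k, c (n + j) ≤ μ[β (n + k)|ℱ n] ω := by
  induction k with
  | zero =>
    rw [add_zero,
      condExp_of_stronglyMeasurable (ℱ.le n) (hβ_adapted n).stronglyMeasurable (hβ_int n)]
    simp
  | succ k ih =>
    have h_step : β (n + k) - (fun _ => c (n + k)) ≤ᵐ[μ] μ[β (n + k + 1)|ℱ (n + k)] := by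
      filter_upwards [hrec (n + k)] with ω hω
      simp only [Pi.sub_apply]
      linarith
    have h_cond := condExp_mono (m := ℱ n) ((hβ_int _).sub (integrable_const _))
      integrable_condExp h_step
    have h_tower : μ[μ[β (n + k + 1)|ℱ (n + k)]|ℱ n] =ᵐ[μ] μ[β (n + k + 1)|ℱ n] :=
      condExp_condExp_of_le (ℱ.mono (Nat.le_add_right n k)) (ℱ.le (n + k))
    have h_sub := condExp_sub (m := ℱ n) (hβ_int (n + k)) (integrable_const (c (n + k)))
    rw [condExp_const (ℱ.le n)] at h_sub
    filter_upwards [ih, h_cond, h_tower, h_sub] with ω h_ih h_cond h_tower h_sub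
    rw [h_sub] at h_cond
    rw [sum_range_succ, ← add_assoc, ← h_tower]
    simp only [Pi.sub_apply] at h_cond
    linarith

theorem ae_le_add_div_mul_condExp_tailSum {τ : ℕ → ℝ} {β : ℕ → Ω → ℝ} {γ ε : ℝ}
    (hτ_nonneg : ∀ n, 0 ≤ τ n) (hτ_div : ¬Summable τ) (hβ_nonneg : ∀ n ω, 0 ≤ β n ω)
    (hβ_int : ∀ n, Integrable (β n) μ) (hβ_adapted : Adapted ℱ β)
    (h_summable : ∀ᵐ ω ∂μ, Summable fun k => τ k * β k ω)
    (hT_int : ∀ n, Integrable (tailSum (fun k ω => τ k * β k ω) n) μ)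
    (hγ : 0 < γ) (hrec : ∀ n, ∀ᵐ ω ∂μ, β n ω - μ[β (n + 1)|ℱ n] ω ≤ γ * τ n)
    (hε : 0 < ε) (n : ℕ) :
    ∀ᵐ ω ∂μ, β n ω ≤ ε + γ / ε * μ[tailSum (fun k ω => τ k * β k ω) n|ℱ n] ω := by
  have h_div : ¬Summable fun j => τ (n + j) := by
    simpa only [add_comm n, summable_nat_add_iff] using hτ_div
  have h_partial : ∀ K, ∑ k ∈ range K, τ (n + k) • β (n + k)
      ≤ᵐ[μ] tailSum (fun k ω => τ k * β k ω) n := fun K => by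
    filter_upwards [h_summable] with ω hω
    simpa [add_comm n] using
      sum_range_le_tailSum (fun k ω => mul_nonneg (hτ_nonneg k) (hβ_nonneg k ω)) hω n K
  filter_upwards [ae_all_iff.2 (ae_sub_sum_le_condExp hβ_int hβ_adapted hrec n),
    ae_all_iff.2 fun K => sum_smul_condExp_le_condExp (fun k _ => hβ_int (n + k)) (hT_int n)
      (h_partial K)] with ω h_drift h_tail
  refine le_add_div_mul_of_drift (fun j => hτ_nonneg (n + j)) h_div hγ hε (fun k => ?_)
    fun K => by simpa using h_tail K
  simpa [mul_sum] using h_drift k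

end Conditional

/-- Technical proposition: let `(τ_n)` be nonnegative reals with `Σ τ_n = ∞` (i.e.
not summable) and `(β_n)` a nonnegative, integrable, adapted real random sequence
with `E[Σ τ_n β_n] < ∞` and `β_n − E[β_{n+1} | 𝔉_n] ≤ γ τ_n` a.s. for some `γ > 0`.
Then `β_n → 0` almost surely. -/
theorem sgm_technical_proposition
    {Ω : Type*} {mF : MeasurableSpace Ω} (μ : Measure Ω) [IsProbabilityMeasure μ]
    (ℱ : Filtration ℕ mF)
    (τ : ℕ → ℝ) (hτ_nonneg : ∀ n, 0 ≤ τ n) (hτ_div : ¬ Summable τ)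
    (β : ℕ → Ω → ℝ)
    (hβ_nonneg : ∀ n ω, 0 ≤ β n ω)
    (hβ_int : ∀ n, Integrable (β n) μ)
    (hβ_adapted : Adapted ℱ β)
    (hsum : ∫⁻ ω, (∑' n, ENNReal.ofReal (τ n * β n ω)) ∂μ < ⊤)
    (γ : ℝ) (hγ : 0 < γ)
    (hrec : ∀ n, ∀ᵐ ω ∂μ, β n ω - (μ[β (n + 1) | ℱ n]) ω ≤ γ * τ n) :
    ∀ᵐ ω ∂μ, Tendsto (fun n => β n ω) atTop (nhds 0) := by
  set f : ℕ → Ω → ℝ := fun k ω => τ k * β k ω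
  have hf_nonneg : ∀ k ω, 0 ≤ f k ω := fun k ω => mul_nonneg (hτ_nonneg k) (hβ_nonneg k ω)
  have hf_meas_sup : ∀ k, Measurable[⨆ n, ℱ n] (f k) := fun k =>
    ((hβ_adapted k).mono (le_iSup (fun n => (ℱ n : MeasurableSpace Ω)) k) le_rfl).const_mul _
  have hf_meas : ∀ k, Measurable (f k) := fun k => (hf_meas_sup k).mono (iSup_le ℱ.le) le_rfl
  have hT_int : ∀ n, Integrable (tailSum f n) μ := integrable_tailSum hf_nonneg hf_meas hsum
  have h_tail_lim : ∀ᵐ ω ∂μ, Tendsto (fun n => μ[tailSum f n|ℱ n] ω) atTop (𝓝 0) :=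
    ae_tendsto_condExp_of_antitone hT_int
      (stronglyMeasurable_tailSum fun k => (hf_meas_sup k).stronglyMeasurable)
      (ae_of_all _ fun ω => antitone_tsum_nat_add (hf_nonneg · ω))
      (ae_of_all _ fun ω => tendsto_sum_nat_add (f · ω))
  have h_bound : ∀ j n : ℕ, ∀ᵐ ω ∂μ,
      β n ω ≤ 1 / ((j : ℝ) + 1) + γ / (1 / ((j : ℝ) + 1)) * μ[tailSum f n|ℱ n] ω :=
    fun j => ae_le_add_div_mul_condExp_tailSum hτ_nonneg hτ_div hβ_nonneg hβ_int hβ_adapted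
      (ae_summable_of_lintegral_tsum_lt_top hf_nonneg hf_meas hsum) hT_int hγ hrec
      (by positivity)
  filter_upwards [h_tail_lim, ae_all_iff.2 fun j => ae_all_iff.2 (h_bound j)] with ω h_lim h_le
  exact tendsto_zero_of_le_add_mul (hβ_nonneg · ω) h_lim tendsto_one_div_add_atTop_nhds_zero_nat
    h_le
end

section
/- In the stochastic gradient setting described in the context, the sequence of objective values converges almost surely to the optimal value: the real random sequence (j(h_n)) converges almost surely, and lim_{n → ∞} j(h_n) = j(h*) with probability one. -/
open MeasureTheory Filter
open scoped RealInnerProductSpace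

/-!
Write `d n = j (h n) - j h*`, which is nonnegative by the variational inequality. Expanding
`‖h (n+1) - h*‖²` through the projection and using the bias bound gives the usual descent
inequality, whose expectation telescopes to `∑ t n * E[d n] < ∞`; hence `∑ t n * d n < ∞` almost
surely and, as `∑ t n = ∞`, `d n` is small infinitely often. To upgrade this to convergence, fix
a level `ε > 0`: the process `max (d n - ε) 0` is an almost supermartingale, since each step of
`d` costs at most `t n * d n` (when `d n ≥ ε / 2`) or `t n ^ 2` (when `d n < ε / 2`) in
conditional expectation, both summable. So `max (d n - ε) 0` converges almost surely, and its
limit must be `0` because it vanishes infinitely often.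
-/

section Projection

variable {X : Type*} [NormedAddCommGroup X] [InnerProductSpace ℝ X] {K : Set X} {P : X → X}
  {f : X → ℝ} {f' : X → X}

theorem proj_eq_self_of_mem (hchar : ∀ z, ∀ w ∈ K, ⟪z - P z, w - P z⟫ ≤ 0) {z : X}
    (hz : z ∈ K) : P z = z :=
  (sub_eq_zero.1 (real_inner_self_nonpos.1 (hchar z z hz))).symm

theorem norm_proj_sub_proj_le (hmem : ∀ z, P z ∈ K)
    (hchar : ∀ z, ∀ w ∈ K, ⟪z - P z, w - P z⟫ ≤ 0) (z z' : X) :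
    ‖P z - P z'‖ ≤ ‖z - z'‖ := by
  have hsq : ‖P z - P z'‖ ^ 2 ≤ ⟪z - z', P z - P z'⟫ := by
    have h₁ := hchar z (P z') (hmem z')
    have h₂ := hchar z' (P z) (hmem z)
    have e : ⟪z - z', P z - P z'⟫ = ⟪P z - P z', P z - P z'⟫ - ⟪z - P z, P z' - P z⟫
        - ⟪z' - P z', P z - P z'⟫ := by
      simp only [inner_sub_left, inner_sub_right, real_inner_comm]; ring
    rw [← real_inner_self_eq_norm_sq]
    linarith
  have := real_inner_le_norm (z - z') (P z - P z')
  nlinarith [norm_nonneg (P z - P z'), norm_nonneg (z - z')]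

theorem norm_proj_sub_le (hmem : ∀ z, P z ∈ K)
    (hchar : ∀ z, ∀ w ∈ K, ⟪z - P z, w - P z⟫ ≤ 0) (z : X) {w : X} (hw : w ∈ K) :
    ‖P z - w‖ ≤ ‖z - w‖ := by
  simpa only [proj_eq_self_of_mem hchar hw] using norm_proj_sub_proj_le hmem hchar z w

theorem norm_proj_sub_smul_sub_sq_le (hmem : ∀ z, P z ∈ K)
    (hchar : ∀ z, ∀ w ∈ K, ⟪z - P z, w - P z⟫ ≤ 0) (x g : X) (t : ℝ) {w : X} (hw : w ∈ K) :
    ‖P (x - t • g) - w‖ ^ 2 ≤ ‖x - w‖ ^ 2 - 2 * t * ⟪x - w, g⟫ + t ^ 2 * ‖g‖ ^ 2 := by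
  calc ‖P (x - t • g) - w‖ ^ 2 ≤ ‖x - w - t • g‖ ^ 2 := by
        rw [sub_right_comm]
        gcongr
        exact norm_proj_sub_le hmem hchar _ hw
    _ = ‖x - w‖ ^ 2 - 2 * t * ⟪x - w, g⟫ + t ^ 2 * ‖g‖ ^ 2 := by
        rw [norm_sub_sq_real, real_inner_smul_right, norm_smul, mul_pow, Real.norm_eq_abs, sq_abs]
        ring

theorem sub_le_mul_norm_sub_of_first_order
    (hfirst : ∀ x ∈ K, ∀ y ∈ K, f x + ⟪f' x, y - x⟫ ≤ f y) {G : ℝ} (hG : ∀ x ∈ K, ‖f' x‖ ≤ G)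
    {x y : X} (hx : x ∈ K) (hy : y ∈ K) : f x - f y ≤ G * ‖x - y‖ := by
  have h := hfirst x hx y hy
  rw [← neg_sub x y, inner_neg_right] at h
  have := (real_inner_le_norm (f' x) (x - y)).trans
    (mul_le_mul_of_nonneg_right (hG x hx) (norm_nonneg _))
  linarith

theorem sub_sub_mul_le_inner_add_of_first_order
    (hfirst : ∀ x ∈ K, ∀ y ∈ K, f x + ⟪f' x, y - x⟫ ≤ f y) {x w b : X} (hx : x ∈ K) (hw : w ∈ K)
    {D κ : ℝ} (hxw : ‖x - w‖ ≤ D) (hb : ‖b‖ ≤ κ) : f x - f w - D * κ ≤ ⟪x - w, f' x + b⟫ := by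
  have hgap := hfirst x hx w hw
  rw [← neg_sub, inner_neg_right] at hgap
  have hbias := (abs_real_inner_le_norm (x - w) b).trans
    (mul_le_mul hxw hb (norm_nonneg _) ((norm_nonneg _).trans hxw))
  rw [inner_add_right, real_inner_comm]
  linarith [neg_abs_le ⟪x - w, b⟫]

theorem sub_le_mul_norm_of_proj_step (hmem : ∀ z, P z ∈ K)
    (hchar : ∀ z, ∀ w ∈ K, ⟪z - P z, w - P z⟫ ≤ 0)
    (hfirst : ∀ x ∈ K, ∀ y ∈ K, f x + ⟪f' x, y - x⟫ ≤ f y) {G : ℝ}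
    (hG : ∀ x ∈ K, ‖f' x‖ ≤ G) {x : X} (hx : x ∈ K) (g : X) {t : ℝ} (ht : 0 ≤ t) :
    f (P (x - t • g)) - f x ≤ t * (G * ‖g‖) := by
  have hmove : ‖P (x - t • g) - x‖ ≤ t * ‖g‖ := by
    simpa [norm_smul, abs_of_nonneg ht] using norm_proj_sub_le hmem hchar (x - t • g) hx
  calc f (P (x - t • g)) - f x ≤ G * ‖P (x - t • g) - x‖ :=
        sub_le_mul_norm_sub_of_first_order hfirst hG (hmem _) hx
    _ ≤ G * (t * ‖g‖) := mul_le_mul_of_nonneg_left hmove ((norm_nonneg _).trans (hG x hx))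
    _ = t * (G * ‖g‖) := mul_left_comm _ _ _

end Projection

theorem max_sub_le_max_sub_add {d d' t v ε : ℝ} (hε : 0 < ε) (hd : 0 ≤ d) (ht : 0 ≤ t)
    (hstep : d' ≤ d + t * v) :
    max (d' - ε) 0 ≤ max (d - ε) 0 + t / ε * d + (t / ε * d + t ^ 2 / (2 * ε)) * v ^ 2 := by
  have h₁ : 0 ≤ t / ε * d := by positivity
  have h₂ : 0 ≤ t ^ 2 / (2 * ε) * v ^ 2 := by positivity
  rcases le_or_gt (ε / 2) d with hdε | hdε
  · have : t * v ≤ t / ε * d * (v ^ 2 + 1) := by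
      calc t * v ≤ t * (1 / 2) * (v ^ 2 + 1) := by nlinarith [sq_nonneg (v - 1)]
        _ ≤ t / ε * d * (v ^ 2 + 1) := by
          refine mul_le_mul_of_nonneg_right ?_ (by positivity)
          rw [div_mul_eq_mul_div, le_div_iff₀ hε]
          nlinarith [mul_le_mul_of_nonneg_left hdε ht]
    refine max_le ?_ ?_ <;> nlinarith [le_max_left (d - ε) 0, le_max_right (d - ε) 0]
  · have : t * v - ε / 2 ≤ t ^ 2 / (2 * ε) * v ^ 2 := by
      rw [div_mul_eq_mul_div, le_div_iff₀ (by positivity)]; nlinarith [sq_nonneg (t * v - ε)]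
    rw [max_eq_right (by linarith : d - ε ≤ 0)]
    refine max_le ?_ ?_ <;> nlinarith

theorem summable_of_le_sub_add {a x y : ℕ → ℝ} (ha : ∀ n, 0 ≤ a n) (hx : ∀ n, 0 ≤ x n)
    (hy : Summable y) (h : ∀ n, a (n + 1) ≤ a n - x n + y n) : Summable x := by
  obtain ⟨C, hC⟩ := hy.tendsto_sum_tsum_nat.bddAbove_range
  refine summable_of_sum_range_le hx (c := a 0 + C) fun N => ?_
  have htel : a N + ∑ k ∈ Finset.range N, x k ≤ a 0 + ∑ k ∈ Finset.range N, y k := by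
    induction N with
    | zero => simp
    | succ N ih => rw [Finset.sum_range_succ, Finset.sum_range_succ]; linarith [h N]
  linarith [ha N, hC ⟨N, rfl⟩]

theorem frequently_lt_of_summable_mul {t d : ℕ → ℝ} (ht : ∀ n, 0 ≤ t n) (ht_div : ¬ Summable t)
    (hsum : Summable fun n => t n * d n) {δ : ℝ} (hδ : 0 < δ) : ∃ᶠ n in atTop, d n < δ := by
  refine fun hge => ht_div (Summable.of_norm_bounded_eventually (hsum.div_const δ) ?_)
  rw [Nat.cofinite_eq_atTop]
  filter_upwards [hge] with n hn
  rw [Real.norm_of_nonneg (ht n), le_div_iff₀ hδ]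
  exact mul_le_mul_of_nonneg_left (not_lt.1 hn) (ht n)

theorem tendsto_zero_of_frequently_lt_of_tendsto_max_sub {d ε : ℕ → ℝ} (hd : ∀ n, 0 ≤ d n)
    (hε_pos : ∀ q, 0 < ε q) (hε : Tendsto ε atTop (nhds 0))
    (hfreq : ∀ δ > 0, ∃ᶠ n in atTop, d n < δ)
    (hlevel : ∀ q, ∃ L, Tendsto (fun n => max (d n - ε q) 0) atTop (nhds L)) :
    Tendsto d atTop (nhds 0) := by
  refine tendsto_order.2 ⟨fun a ha => Eventually.of_forall fun n => ha.trans_le (hd n),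
    fun η hη => ?_⟩
  obtain ⟨q, hq⟩ := (hε.eventually (gt_mem_nhds (half_pos hη))).exists
  obtain ⟨L, hL⟩ := hlevel q
  have hL0 : L = 0 := tendsto_nhds_unique_of_frequently_eq hL tendsto_const_nhds <|
    (hfreq _ (hε_pos q)).mono fun n hn => max_eq_right (by linarith)
  filter_upwards [hL.eventually (gt_mem_nhds (hL0 ▸ half_pos hη))] with n hn
  linarith [le_max_left (d n - ε q) 0]

section Probability

variable {Ω : Type*} {m m0 : MeasurableSpace Ω} {μ : Measure Ω}

theorem integral_le_of_condExp_le [IsProbabilityMeasure μ] (hm : m ≤ m0) {f : Ω → ℝ} {M : ℝ}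
    (hf : μ[f|m] ≤ᵐ[μ] fun _ => M) : ∫ ω, f ω ∂μ ≤ M := by
  rw [← integral_condExp hm]
  simpa using integral_mono_ae integrable_condExp (integrable_const M) hf

theorem integral_inner_condExp {X : Type*} [NormedAddCommGroup X] [InnerProductSpace ℝ X]
    [CompleteSpace X] [IsFiniteMeasure μ] (hm : m ≤ m0) {v g : Ω → X}
    (hv : StronglyMeasurable[m] v) (hg : Integrable g μ) {C : ℝ} (hvC : ∀ᵐ ω ∂μ, ‖v ω‖ ≤ C) :
    ∫ ω, ⟪v ω, g ω⟫ ∂μ = ∫ ω, ⟪v ω, μ[g|m] ω⟫ ∂μ := by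
  rw [← integral_condExp hm]
  exact integral_congr_ae (condExp_stronglyMeasurable_bilin_of_bound (innerSL ℝ) hm hv hg C hvC)

theorem condExp_le_add_mul [IsFiniteMeasure μ] (hm : m ≤ m0) {f u a G : Ω → ℝ} {C M : ℝ}
    (hf : Integrable f μ) (hu : StronglyMeasurable[m] u) (hu_int : Integrable u μ)
    (ha : StronglyMeasurable[m] a) (ha_nonneg : 0 ≤ᵐ[μ] a) (ha_bdd : ∀ᵐ ω ∂μ, ‖a ω‖ ≤ C)
    (hG : Integrable G μ) (hGM : μ[G|m] ≤ᵐ[μ] fun _ => M)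
    (hle : f ≤ᵐ[μ] fun ω => u ω + a ω * G ω) : μ[f|m] ≤ᵐ[μ] fun ω => u ω + a ω * M := by
  have haG : Integrable (a * G) μ := hG.bdd_mul (ha.mono hm).aestronglyMeasurable ha_bdd
  filter_upwards [condExp_mono (m := m) hf (hu_int.add haG) hle, condExp_add hu_int haG m,
    condExp_stronglyMeasurable_mul_of_bound hm ha hG C ha_bdd, hGM, ha_nonneg]
    with ω hmono hadd hpull hGω haω
  rw [condExp_of_stronglyMeasurable hm hu hu_int] at hadd
  calc μ[f|m] ω ≤ μ[u + a * G|m] ω := hmono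
    _ = u ω + a ω * μ[G|m] ω := by rw [hadd, Pi.add_apply, hpull, Pi.mul_apply]
    _ ≤ u ω + a ω * M := by gcongr

theorem ae_summable_of_summable_integral {f : ℕ → Ω → ℝ} (hf : ∀ n, Integrable (f n) μ)
    (hf_nonneg : ∀ n, 0 ≤ᵐ[μ] f n) (hsum : Summable fun n => ∫ ω, f n ω ∂μ) :
    ∀ᵐ ω ∂μ, Summable fun n => f n ω := by
  have hnorm : ∀ n, ∫ ω, ‖f n ω‖ ∂μ = ∫ ω, f n ω ∂μ := fun n =>
    integral_congr_ae <| (hf_nonneg n).mono fun ω hω => Real.norm_of_nonneg hω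
  have hfin : ∑' n, eLpNorm (f n) 1 μ ≠ ⊤ := by
    simp_rw [eLpNorm_one_eq_lintegral_enorm, ← ofReal_integral_norm_eq_lintegral_enorm (hf _),
      hnorm]
    rw [← ENNReal.ofReal_tsum_of_nonneg (fun n => integral_nonneg_of_ae (hf_nonneg n)) hsum]
    exact ENNReal.ofReal_ne_top
  filter_upwards [summable_norm_of_tsum_eLpNorm_ne_top le_rfl
    (fun n => (hf n).aestronglyMeasurable) hfin] with ω hω
  exact hω.of_norm

theorem MeasureTheory.StronglyAdapted.integrable_of_nonneg_of_le [IsFiniteMeasure μ]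
    {ℱ : Filtration ℕ m0} {f : ℕ → Ω → ℝ} (hf : StronglyAdapted ℱ f)
    (hf_nonneg : ∀ n ω, 0 ≤ f n ω) {C : ℝ} (hf_le : ∀ n ω, f n ω ≤ C) (n : ℕ) :
    Integrable (f n) μ :=
  .of_bound ((hf n).mono (ℱ.le n)).aestronglyMeasurable C <| ae_of_all _ fun ω => by
    rw [Real.norm_of_nonneg (hf_nonneg n ω)]; exact hf_le n ω

section AlmostSupermartingale

variable [IsFiniteMeasure μ] {ℱ : Filtration ℕ m0} {W β : ℕ → Ω → ℝ}

theorem integral_le_add_sum_of_condExp_le_add (hW_int : ∀ n, Integrable (W n) μ)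
    (hβ_int : ∀ n, Integrable (β n) μ) (hcond : ∀ n, μ[W (n + 1)|ℱ n] ≤ᵐ[μ] W n + β n) (n : ℕ) :
    ∫ ω, W n ω ∂μ ≤ ∫ ω, W 0 ω ∂μ + ∑ k ∈ Finset.range n, ∫ ω, β k ω ∂μ := by
  induction n with
  | zero => simp
  | succ n ih =>
    have hstep : ∫ ω, W (n + 1) ω ∂μ ≤ ∫ ω, W n ω ∂μ + ∫ ω, β n ω ∂μ := by
      rw [← integral_condExp (ℱ.le n), ← integral_add (hW_int n) (hβ_int n)]
      exact integral_mono_ae integrable_condExp ((hW_int n).add (hβ_int n)) (hcond n)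
    rw [Finset.sum_range_succ]
    linarith

theorem submartingale_sum_sub_of_condExp_le_add (hW : StronglyAdapted ℱ W)
    (hW_int : ∀ n, Integrable (W n) μ) (hβ : StronglyAdapted ℱ β)
    (hβ_int : ∀ n, Integrable (β n) μ) (hcond : ∀ n, μ[W (n + 1)|ℱ n] ≤ᵐ[μ] W n + β n) :
    Submartingale (fun n ω => ∑ k ∈ Finset.range n, β k ω - W n ω) ℱ μ := by
  have hB : ∀ n i, n ≤ i + 1 → StronglyMeasurable[ℱ i] fun ω => ∑ k ∈ Finset.range n, β k ω :=
    fun n i hni => Finset.stronglyMeasurable_fun_sum _ fun k hk =>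
      (hβ k).mono (ℱ.mono (Nat.lt_succ_iff.1 ((Finset.mem_range.1 hk).trans_le hni)))
  have hB_int : ∀ n, Integrable (fun ω => ∑ k ∈ Finset.range n, β k ω) μ :=
    fun n => integrable_finsetSum _ fun k _ => hβ_int k
  refine submartingale_nat (fun n => (hB n n n.le_succ).sub (hW n))
    (fun n => (hB_int n).sub (hW_int n)) fun n => ?_
  have hcond_sub := condExp_sub (m := ℱ n) (hB_int (n + 1)) (hW_int (n + 1))
  rw [condExp_of_stronglyMeasurable (ℱ.le n) (hB (n + 1) n le_rfl) (hB_int (n + 1))]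
    at hcond_sub
  filter_upwards [hcond_sub, hcond n] with ω hω hWω
  simp only [Pi.sub_apply, Pi.add_apply] at hω hWω ⊢
  refine le_of_le_of_eq ?_ hω.symm
  rw [Finset.sum_range_succ]
  linarith

/-- The Robbins–Siegmund theorem without multiplicative perturbation: `∑ k < n, β k - W n` is an
`L¹`-bounded submartingale. -/
theorem ae_tendsto_of_condExp_le_add (hW : StronglyAdapted ℱ W)
    (hW_int : ∀ n, Integrable (W n) μ) (hW_nonneg : ∀ n, 0 ≤ᵐ[μ] W n)
    (hβ : StronglyAdapted ℱ β) (hβ_int : ∀ n, Integrable (β n) μ)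
    (hβ_nonneg : ∀ n, 0 ≤ᵐ[μ] β n) (hβ_sum : Summable fun n => ∫ ω, β n ω ∂μ)
    (hcond : ∀ n, μ[W (n + 1)|ℱ n] ≤ᵐ[μ] W n + β n) :
    ∀ᵐ ω ∂μ, ∃ L, Tendsto (fun n => W n ω) atTop (nhds L) := by
  set S := ∑' n, ∫ ω, β n ω ∂μ
  have hpartial : ∀ n, ∑ k ∈ Finset.range n, ∫ ω, β k ω ∂μ ≤ S := fun n =>
    hβ_sum.sum_le_tsum _ fun k _ => integral_nonneg_of_ae (hβ_nonneg k)
  have hbdd : ∀ n, eLpNorm (fun ω => ∑ k ∈ Finset.range n, β k ω - W n ω) 1 μ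
      ≤ ENNReal.ofReal (2 * S + ∫ ω, W 0 ω ∂μ) := by
    intro n
    have hB_int : Integrable (fun ω => ∑ k ∈ Finset.range n, β k ω) μ :=
      integrable_finsetSum _ fun k _ => hβ_int k
    have hY_int : Integrable (fun ω => ∑ k ∈ Finset.range n, β k ω - W n ω) μ :=
      hB_int.sub (hW_int n)
    rw [eLpNorm_one_eq_lintegral_enorm, ← ofReal_integral_norm_eq_lintegral_enorm hY_int]
    refine ENNReal.ofReal_le_ofReal ?_
    have hnorm : ∫ ω, ‖∑ k ∈ Finset.range n, β k ω - W n ω‖ ∂μ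
        ≤ ∫ ω, (∑ k ∈ Finset.range n, β k ω + W n ω) ∂μ := by
      refine integral_mono_ae hY_int.norm (hB_int.add (hW_int n)) ?_
      filter_upwards [ae_all_iff.2 hβ_nonneg, hW_nonneg n] with ω hβω hWω
      have : 0 ≤ ∑ k ∈ Finset.range n, β k ω := Finset.sum_nonneg fun k _ => hβω k
      rw [Real.norm_eq_abs, abs_le]
      constructor <;> simp only [Pi.zero_apply] at hWω <;> linarith
    rw [integral_add hB_int (hW_int n), integral_finsetSum _ fun k _ => hβ_int k] at hnorm
    linarith [hpartial n, integral_le_add_sum_of_condExp_le_add hW_int hβ_int hcond n]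
  filter_upwards [(submartingale_sum_sub_of_condExp_le_add hW hW_int hβ hβ_int
    hcond).exists_ae_tendsto_of_bdd hbdd,
    ae_summable_of_summable_integral hβ_int hβ_nonneg hβ_sum] with ω ⟨L, hL⟩ hβω
  exact ⟨_, (hβω.hasSum.tendsto_sum_nat.sub hL).congr fun n => sub_sub_cancel _ _⟩

end AlmostSupermartingale

section Descent

variable {X : Type*} [NormedAddCommGroup X] [InnerProductSpace ℝ X] {K : Set X} {P : X → X}

theorem integral_norm_sub_sq_le_of_proj_step [IsFiniteMeasure μ] (hmem : ∀ z, P z ∈ K)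
    (hchar : ∀ z, ∀ w ∈ K, ⟪z - P z, w - P z⟫ ≤ 0) {w : X} (hw : w ∈ K) {D : ℝ}
    (hD : ∀ y ∈ K, ‖y - w‖ ≤ D) {x x' g : Ω → X} (hx : AEStronglyMeasurable x μ)
    (hx' : AEStronglyMeasurable x' μ) (hx_mem : ∀ ω, x ω ∈ K) {t : ℝ}
    (hrec : ∀ ω, x' ω = P (x ω - t • g ω)) (hg : MemLp g 2 μ) :
    ∫ ω, ‖x' ω - w‖ ^ 2 ∂μ ≤ ∫ ω, ‖x ω - w‖ ^ 2 ∂μ - 2 * t * ∫ ω, ⟪x ω - w, g ω⟫ ∂μ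
      + t ^ 2 * ∫ ω, ‖g ω‖ ^ 2 ∂μ := by
  have hsq_int : ∀ y : Ω → X, AEStronglyMeasurable y μ → (∀ ω, y ω ∈ K) →
      Integrable (fun ω => ‖y ω - w‖ ^ 2) μ := fun y hy hy_mem =>
    .of_bound ((hy.sub aestronglyMeasurable_const).norm.pow 2) (D ^ 2) <| ae_of_all _ fun ω => by
      rw [Real.norm_of_nonneg (by positivity)]
      exact pow_le_pow_left₀ (norm_nonneg _) (hD _ (hy_mem ω)) 2
  have hinner_int : Integrable (fun ω => ⟪x ω - w, g ω⟫) μ :=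
    (innerSL ℝ).integrable_of_bilin_of_bdd_left D (hx.sub aestronglyMeasurable_const)
      (ae_of_all _ fun ω => hD _ (hx_mem ω)) (hg.integrable one_le_two)
  have hlin_int : Integrable (fun ω => ‖x ω - w‖ ^ 2 - 2 * t * ⟪x ω - w, g ω⟫) μ :=
    (hsq_int x hx hx_mem).sub (hinner_int.const_mul _)
  have hg_sq_int : Integrable (fun ω => ‖g ω‖ ^ 2) μ := hg.integrable_norm_pow two_ne_zero
  calc ∫ ω, ‖x' ω - w‖ ^ 2 ∂μ
      ≤ ∫ ω, (‖x ω - w‖ ^ 2 - 2 * t * ⟪x ω - w, g ω⟫ + t ^ 2 * ‖g ω‖ ^ 2) ∂μ :=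
        integral_mono (hsq_int x' hx' fun ω => hrec ω ▸ hmem _)
          (hlin_int.add (hg_sq_int.const_mul _)) fun ω => by
          simpa only [hrec] using norm_proj_sub_smul_sub_sq_le hmem hchar _ _ _ hw
    _ = _ := by
      rw [integral_add hlin_int (hg_sq_int.const_mul _),
        integral_sub (hsq_int x hx hx_mem) (hinner_int.const_mul _), integral_const_mul,
        integral_const_mul]

theorem summable_mul_integral_of_proj_step [CompleteSpace X] [IsProbabilityMeasure μ]
    {ℱ : Filtration ℕ m0} (hmem : ∀ z, P z ∈ K) (hchar : ∀ z, ∀ w ∈ K, ⟪z - P z, w - P z⟫ ≤ 0)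
    {w : X} (hw : w ∈ K) {D : ℝ} (hD : ∀ y ∈ K, ‖y - w‖ ≤ D)
    {x g : ℕ → Ω → X} {t : ℕ → ℝ} (hx : StronglyAdapted ℱ x) (hx_mem : ∀ n ω, x n ω ∈ K)
    (hrec : ∀ n ω, x (n + 1) ω = P (x n ω - t n • g n ω)) (hg : ∀ n, MemLp (g n) 2 μ) {M : ℝ}
    (hsecond : ∀ n, μ[fun ω => ‖g n ω‖ ^ 2|ℱ n] ≤ᵐ[μ] fun _ => M)
    {e : ℕ → Ω → ℝ} {δ : ℕ → ℝ} (he_int : ∀ n, Integrable (e n) μ)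
    (he_nonneg : ∀ n, 0 ≤ᵐ[μ] e n)
    (hdescent : ∀ n, ∀ᵐ ω ∂μ, e n ω - δ n ≤ ⟪x n ω - w, μ[g n|ℱ n] ω⟫)
    (ht : ∀ n, 0 ≤ t n) (htδ : Summable fun n => t n * δ n)
    (ht_sq : Summable fun n => t n ^ 2) :
    Summable fun n => t n * ∫ ω, e n ω ∂μ := by
  have hxw : ∀ n, ∀ᵐ ω ∂μ, ‖x n ω - w‖ ≤ D := fun n => ae_of_all _ fun ω => hD _ (hx_mem n ω)
  have hv : ∀ n, StronglyMeasurable[ℱ n] fun ω => x n ω - w :=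
    fun n => (hx n).sub stronglyMeasurable_const
  have hx' : ∀ n, AEStronglyMeasurable (x n) μ :=
    fun n => ((hx n).mono (ℱ.le n)).aestronglyMeasurable
  have hinner_ge : ∀ n, ∫ ω, e n ω ∂μ - δ n ≤ ∫ ω, ⟪x n ω - w, g n ω⟫ ∂μ := fun n => by
    have hint : Integrable (fun ω => ⟪x n ω - w, μ[g n|ℱ n] ω⟫) μ :=
      (innerSL ℝ).integrable_of_bilin_of_bdd_left D ((hx' n).sub aestronglyMeasurable_const)
        (hxw n) integrable_condExp
    rw [integral_inner_condExp (ℱ.le n) (hv n) ((hg n).integrable one_le_two) (hxw n)]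
    simpa [integral_sub (he_int n) (integrable_const _)] using
      integral_mono_ae ((he_int n).sub (integrable_const _)) hint (hdescent n)
  have hstep : ∀ n, ∫ ω, ‖x (n + 1) ω - w‖ ^ 2 ∂μ ≤ ∫ ω, ‖x n ω - w‖ ^ 2 ∂μ
      - 2 * (t n * ∫ ω, e n ω ∂μ) + (2 * (t n * δ n) + M * t n ^ 2) := fun n => by
    have h₀ := integral_norm_sub_sq_le_of_proj_step hmem hchar hw hD (hx' n) (hx' (n + 1))
      (hx_mem n) (hrec n) (hg n)
    have h₁ := mul_le_mul_of_nonneg_left (hinner_ge n) (mul_nonneg zero_le_two (ht n))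
    have h₂ := mul_le_mul_of_nonneg_left (integral_le_of_condExp_le (ℱ.le n) (hsecond n))
      (sq_nonneg (t n))
    linarith
  refine (summable_mul_left_iff two_ne_zero).1 <| summable_of_le_sub_add
    (a := fun n => ∫ ω, ‖x n ω - w‖ ^ 2 ∂μ) (fun n => integral_nonneg fun ω => sq_nonneg _)
    (fun n => mul_nonneg zero_le_two (mul_nonneg (ht n) (integral_nonneg_of_ae (he_nonneg n))))
    ((htδ.mul_left 2).add (ht_sq.mul_left M)) hstep

end Descent

section Level

variable {E : Type*} [NormedAddCommGroup E] [IsProbabilityMeasure μ] {ℱ : Filtration ℕ m0}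
  {d : ℕ → Ω → ℝ} {g : ℕ → Ω → E} {t : ℕ → ℝ} {c D M ε : ℝ}

theorem condExp_max_sub_succ_le (hd : StronglyAdapted ℱ d) (hd_nonneg : ∀ n ω, 0 ≤ d n ω)
    (hd_le : ∀ n ω, d n ω ≤ D) (hg : ∀ n, MemLp (g n) 2 μ)
    (hsecond : ∀ n, μ[fun ω => ‖g n ω‖ ^ 2|ℱ n] ≤ᵐ[μ] fun _ => M) (ht : ∀ n, 0 ≤ t n)
    (hstep : ∀ n ω, d (n + 1) ω ≤ d n ω + t n * (c * ‖g n ω‖)) (hε : 0 < ε) (n : ℕ) :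
    μ[fun ω => max (d (n + 1) ω - ε) 0|ℱ n] ≤ᵐ[μ] fun ω => max (d n ω - ε) 0
      + (t n * d n ω * ((1 + c ^ 2 * M) / ε) + t n ^ 2 * (c ^ 2 * M / (2 * ε))) := by
  have hd_int := hd.integrable_of_nonneg_of_le (μ := μ) hd_nonneg hd_le
  set a : Ω → ℝ := fun ω => (t n / ε * d n ω + t n ^ 2 / (2 * ε)) * c ^ 2
  have ha : StronglyMeasurable[ℱ n] a :=
    (((hd n).const_mul (t n / ε)).add stronglyMeasurable_const).mul_const _
  have ha_nonneg : ∀ ω, 0 ≤ a ω := fun ω => by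
    have := hd_nonneg n ω; have := ht n; positivity
  have ha_le : ∀ ω, ‖a ω‖ ≤ (t n / ε * D + t n ^ 2 / (2 * ε)) * c ^ 2 := fun ω => by
    rw [Real.norm_of_nonneg (ha_nonneg ω)]
    simp only [a]
    have := ht n
    gcongr
    exact hd_le n ω
  have hW_int : ∀ n, Integrable (fun ω => max (d n ω - ε) 0) μ := fun n =>
    ((hd_int n).sub (integrable_const ε)).pos_part
  refine (condExp_le_add_mul (ℱ.le n) (hW_int (n + 1))
    ((((continuous_sub_right ε).max continuous_const).comp_stronglyMeasurable (hd n)).add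
      ((hd n).const_mul (t n / ε)))
    ((hW_int n).add ((hd_int n).const_mul (t n / ε))) ha (ae_of_all _ ha_nonneg)
    (ae_of_all _ ha_le) ((hg n).integrable_norm_pow two_ne_zero) (hsecond n)
    (ae_of_all _ fun ω => ?_)).trans (ae_of_all _ fun ω => le_of_eq ?_)
  · have := max_sub_le_max_sub_add hε (hd_nonneg n ω) (ht n) (hstep n ω)
    rw [mul_pow] at this
    simp only [a, Pi.add_apply]
    linarith
  · simp only [a, Pi.add_apply]
    field_simp
    ring

theorem ae_tendsto_max_sub_of_le_add (hd : StronglyAdapted ℱ d) (hd_nonneg : ∀ n ω, 0 ≤ d n ω)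
    (hd_le : ∀ n ω, d n ω ≤ D) (hg : ∀ n, MemLp (g n) 2 μ)
    (hsecond : ∀ n, μ[fun ω => ‖g n ω‖ ^ 2|ℱ n] ≤ᵐ[μ] fun _ => M) (ht : ∀ n, 0 ≤ t n)
    (hstep : ∀ n ω, d (n + 1) ω ≤ d n ω + t n * (c * ‖g n ω‖))
    (hsum : Summable fun n => t n * ∫ ω, d n ω ∂μ) (ht_sq : Summable fun n => t n ^ 2)
    (hε : 0 < ε) :
    ∀ᵐ ω ∂μ, ∃ L, Tendsto (fun n => max (d n ω - ε) 0) atTop (nhds L) := by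
  have hM : 0 ≤ M := (integral_nonneg fun ω => sq_nonneg ‖g 0 ω‖).trans
    (integral_le_of_condExp_le (ℱ.le 0) (hsecond 0))
  set κ₁ := (1 + c ^ 2 * M) / ε
  set κ₂ := c ^ 2 * M / (2 * ε)
  have hκ₁ : 0 ≤ κ₁ := by positivity
  have hκ₂ : 0 ≤ κ₂ := by positivity
  have hd_int := hd.integrable_of_nonneg_of_le (μ := μ) hd_nonneg hd_le
  have hβ_int : ∀ n, Integrable (fun ω => t n * d n ω * κ₁ + t n ^ 2 * κ₂) μ := fun n =>
    (((hd_int n).const_mul (t n)).mul_const κ₁).add (integrable_const _)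
  refine ae_tendsto_of_condExp_le_add (β := fun n ω => t n * d n ω * κ₁ + t n ^ 2 * κ₂)
    (fun n => ((continuous_sub_right ε).max continuous_const).comp_stronglyMeasurable (hd n))
    (fun n => ((hd_int n).sub (integrable_const ε)).pos_part)
    (fun n => ae_of_all _ fun ω => le_max_right _ _)
    (fun n => (((hd n).const_mul (t n)).mul_const κ₁).add stronglyMeasurable_const) hβ_int
    (fun n => ae_of_all _ fun ω => add_nonneg (mul_nonneg (mul_nonneg (ht n) (hd_nonneg n ω)) hκ₁)
      (mul_nonneg (sq_nonneg _) hκ₂)) ?_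
    (condExp_max_sub_succ_le hd hd_nonneg hd_le hg hsecond ht hstep hε)
  refine ((hsum.mul_right κ₁).add (ht_sq.mul_right κ₂)).congr fun n => ?_
  rw [integral_add (((hd_int n).const_mul (t n)).mul_const κ₁) (integrable_const _),
    integral_mul_const, integral_const_mul]
  simp

theorem ae_tendsto_zero_of_le_add (hd : StronglyAdapted ℱ d) (hd_nonneg : ∀ n ω, 0 ≤ d n ω)
    (hd_le : ∀ n ω, d n ω ≤ D) (hg : ∀ n, MemLp (g n) 2 μ)
    (hsecond : ∀ n, μ[fun ω => ‖g n ω‖ ^ 2|ℱ n] ≤ᵐ[μ] fun _ => M) (ht : ∀ n, 0 ≤ t n)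
    (hstep : ∀ n ω, d (n + 1) ω ≤ d n ω + t n * (c * ‖g n ω‖)) (ht_div : ¬ Summable t)
    (hsum : Summable fun n => t n * ∫ ω, d n ω ∂μ) (ht_sq : Summable fun n => t n ^ 2) :
    ∀ᵐ ω ∂μ, Tendsto (fun n => d n ω) atTop (nhds 0) := by
  have hlevel : ∀ q : ℕ, ∀ᵐ ω ∂μ, ∃ L,
      Tendsto (fun n => max (d n ω - 1 / ((q : ℝ) + 1)) 0) atTop (nhds L) := fun q =>
    ae_tendsto_max_sub_of_le_add hd hd_nonneg hd_le hg hsecond ht hstep hsum ht_sq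
      (by positivity)
  have hd_int := hd.integrable_of_nonneg_of_le (μ := μ) hd_nonneg hd_le
  filter_upwards [ae_summable_of_summable_integral (fun n => (hd_int n).const_mul (t n))
    (fun n => ae_of_all _ fun ω => mul_nonneg (ht n) (hd_nonneg n ω))
    (hsum.congr fun n => (integral_const_mul _ _).symm), ae_all_iff.2 hlevel] with ω hsumω hlevelω
  exact tendsto_zero_of_frequently_lt_of_tendsto_max_sub (hd_nonneg · ω) (fun q => by positivity)
    tendsto_one_div_add_atTop_nhds_zero_nat
    (fun δ hδ => frequently_lt_of_summable_mul ht ht_div hsumω hδ) hlevelω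

end Level

end Probability

theorem sgm_objective_values_converge_general
    {X : Type*} [NormedAddCommGroup X] [InnerProductSpace ℝ X] [CompleteSpace X]
    {H : Type*} [NormedAddCommGroup H] [InnerProductSpace ℝ H]
    (e : X →L[ℝ] H)
    (Xad : Set X) (hbdd : Bornology.IsBounded Xad)
    (proj : X → X)
    (hproj_mem : ∀ z : X, proj z ∈ Xad)
    (hproj_char : ∀ z : X, ∀ w ∈ Xad, ⟪z - proj z, w - proj z⟫ ≤ 0)
    (j : X → ℝ) (hjcont : Continuous j)
    (gradj : X → X)
    (Mgrad : ℝ) (hgradbdd : ∀ x ∈ Xad, ‖gradj x‖ ≤ Mgrad)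
    (cE : ℝ) (hcE : 0 < cE)
    (hstrong : ∀ h₁ ∈ Xad, ∀ h₂ ∈ Xad,
      j h₂ ≥ j h₁ + ⟪gradj h₁, h₂ - h₁⟫ + cE / 2 * ‖e (h₂ - h₁)‖ ^ 2)
    (hstar : X) (hstar_mem : hstar ∈ Xad)
    (hVI : ∀ w ∈ Xad, ⟪gradj hstar, w - hstar⟫ ≥ 0)
    {Ω : Type*} {mF : MeasurableSpace Ω} (μ : Measure Ω) [IsProbabilityMeasure μ]
    (ℱ : Filtration ℕ mF)
    (t : ℕ → ℝ) (ht_nonneg : ∀ n, 0 ≤ t n) (ht_div : ¬ Summable t)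
    (ht_sq : Summable fun n => t n ^ 2)
    (h : ℕ → Ω → X) (g : ℕ → Ω → X) (b : ℕ → Ω → X)
    (h0 : X) (hh0 : h0 ∈ Xad) (hinit : ∀ ω, h 0 ω = h0)
    (hrec : ∀ n ω, h (n + 1) ω = proj (h n ω - t n • g n ω))
    (hg_int : ∀ n, MemLp (g n) 2 μ)
    (hh_meas : ∀ n, StronglyMeasurable[ℱ n] (h n))
    (hbias : ∀ n, μ[g n | ℱ n] =ᵐ[μ] fun ω => gradj (h n ω) + b n ω)
    (K : ℕ → ℝ) (hK : ∀ n, ∀ᵐ ω ∂μ, ‖b n ω‖ ≤ K n)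
    (hKsum : Summable fun n => t n * K n)
    (M : ℝ)
    (hsecond : ∀ n, μ[(fun ω => ‖g n ω‖ ^ 2) | ℱ n] ≤ᵐ[μ] fun _ => M) :
    ∀ᵐ ω ∂μ, Tendsto (fun n => j (h n ω)) atTop (nhds (j hstar)) := by
  obtain ⟨D, hD⟩ := Metric.isBounded_iff.1 hbdd
  have hD' : ∀ y ∈ Xad, ‖y - hstar‖ ≤ D := fun y hy => dist_eq_norm y hstar ▸ hD hy hstar_mem
  have hmem : ∀ n ω, h n ω ∈ Xad
    | 0, ω => hinit ω ▸ hh0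
    | n + 1, ω => hrec n ω ▸ hproj_mem _
  have hfirst : ∀ x ∈ Xad, ∀ y ∈ Xad, j x + ⟪gradj x, y - x⟫ ≤ j y := fun x hx y hy => by
    nlinarith [hstrong x hx y hy, mul_nonneg hcE.le (sq_nonneg ‖e (y - x)‖)]
  set d : ℕ → Ω → ℝ := fun n ω => j (h n ω) - j hstar with hd_def
  have hd : StronglyAdapted ℱ d := fun n =>
    (hjcont.comp_stronglyMeasurable (hh_meas n)).sub stronglyMeasurable_const
  have hd_nonneg : ∀ n ω, 0 ≤ d n ω := fun n ω => by
    linarith [hfirst hstar hstar_mem _ (hmem n ω), hVI _ (hmem n ω)]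
  have hd_le : ∀ n ω, d n ω ≤ Mgrad * D := fun n ω =>
    (sub_le_mul_norm_sub_of_first_order hfirst hgradbdd (hmem n ω) hstar_mem).trans
      (mul_le_mul_of_nonneg_left (hD' _ (hmem n ω)) ((norm_nonneg _).trans (hgradbdd _ hh0)))
  have hsum := summable_mul_integral_of_proj_step hproj_mem hproj_char hstar_mem hD' hh_meas hmem
    hrec hg_int hsecond (hd.integrable_of_nonneg_of_le hd_nonneg hd_le)
    (fun n => ae_of_all _ (hd_nonneg n)) (fun n => by
      filter_upwards [hbias n, hK n] with ω hbω hKω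
      rw [hbω]
      exact sub_sub_mul_le_inner_add_of_first_order hfirst (hmem n ω) hstar_mem
        (hD' _ (hmem n ω)) hKω)
    ht_nonneg ((hKsum.mul_left D).congr fun n => mul_left_comm _ _ _) ht_sq
  have hstep : ∀ n ω, d (n + 1) ω ≤ d n ω + t n * (Mgrad * ‖g n ω‖) := fun n ω => by
    have := sub_le_mul_norm_of_proj_step hproj_mem hproj_char hfirst hgradbdd (hmem n ω) (g n ω)
      (ht_nonneg n)
    simp only [hd_def, hrec]
    linarith
  filter_upwards [ae_tendsto_zero_of_le_add hd hd_nonneg hd_le hg_int hsecond ht_nonneg hstep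
    ht_div hsum ht_sq] with ω hω
  simpa [hd_def] using hω.add_const (j hstar)

/-- Almost sure convergence of the objective values of the projected stochastic
gradient method, in the two-norm setting: under the Robbins–Monro step size rule,
boundedness of `X_ad`, `H`-strong convexity of `j` via the embedding `e : X → H`,
bias bounds `Σ t_n K_n < ∞`, `sup K_n < ∞`, and a uniform conditional second moment
bound on the stochastic gradients, the sequence `(j(h_n))` converges almost surely
and `lim_{n→∞} j(h_n) = j(h*)` with probability one. -/
theorem sgm_objective_values_converge
    {X : Type*} [NormedAddCommGroup X] [InnerProductSpace ℝ X] [CompleteSpace X]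
    [TopologicalSpace.SeparableSpace X]
    {H : Type*} [NormedAddCommGroup H] [InnerProductSpace ℝ H] [CompleteSpace H]
    (e : X →L[ℝ] H)
    (Xad : Set X) (hne : Xad.Nonempty) (hclosed : IsClosed Xad)
    (hconv : Convex ℝ Xad) (hbdd : Bornology.IsBounded Xad)
    (proj : X → X)
    (hproj_mem : ∀ z : X, proj z ∈ Xad)
    (hproj_char : ∀ z : X, ∀ w ∈ Xad, ⟪z - proj z, w - proj z⟫ ≤ 0)
    (j : X → ℝ) (hjconv : ConvexOn ℝ Set.univ j) (hjcont : Continuous j)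
    (gradj : X → X) (hdiff : ∀ x : X, HasGradientAt j (gradj x) x)
    (Mgrad : ℝ) (hgradbdd : ∀ x ∈ Xad, ‖gradj x‖ ≤ Mgrad)
    (cE : ℝ) (hcE : 0 < cE)
    (hstrong : ∀ h₁ ∈ Xad, ∀ h₂ ∈ Xad,
      j h₂ ≥ j h₁ + ⟪gradj h₁, h₂ - h₁⟫ + cE / 2 * ‖e (h₂ - h₁)‖ ^ 2)
    (hstar : X) (hstar_mem : hstar ∈ Xad)
    (hVI : ∀ w ∈ Xad, ⟪gradj hstar, w - hstar⟫ ≥ 0)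
    {Ω : Type*} {mF : MeasurableSpace Ω} (μ : Measure Ω) [IsProbabilityMeasure μ]
    (ℱ : Filtration ℕ mF)
    (t : ℕ → ℝ) (ht_nonneg : ∀ n, 0 ≤ t n) (ht_div : ¬ Summable t)
    (ht_sq : Summable fun n => t n ^ 2)
    (h : ℕ → Ω → X) (g : ℕ → Ω → X) (b : ℕ → Ω → X)
    (h0 : X) (hh0 : h0 ∈ Xad) (hinit : ∀ ω, h 0 ω = h0)
    (hrec : ∀ n ω, h (n + 1) ω = proj (h n ω - t n • g n ω))
    (hg_int : ∀ n, MemLp (g n) 2 μ)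
    (hh_meas : ∀ n, StronglyMeasurable[ℱ n] (h n))
    (hb_meas : ∀ n, StronglyMeasurable[ℱ n] (b n))
    (hbias : ∀ n, μ[g n | ℱ n] =ᵐ[μ] fun ω => gradj (h n ω) + b n ω)
    (K : ℕ → ℝ) (hK : ∀ n, ∀ᵐ ω ∂μ, ‖b n ω‖ ≤ K n)
    (hKsum : Summable fun n => t n * K n) (hKbdd : BddAbove (Set.range K))
    (M : ℝ) (hM : 0 ≤ M)
    (hsecond : ∀ n, μ[(fun ω => ‖g n ω‖ ^ 2) | ℱ n] ≤ᵐ[μ] fun _ => M) :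
    ∀ᵐ ω ∂μ, Tendsto (fun n => j (h n ω)) atTop (nhds (j hstar)) :=
  sgm_objective_values_converge_general e Xad hbdd proj hproj_mem hproj_char j hjcont gradj Mgrad
    hgradbdd cE hcE hstrong hstar hstar_mem hVI μ ℱ t ht_nonneg ht_div ht_sq h g b h0 hh0 hinit hrec
    hg_int hh_meas hbias K hK hKsum M hsecond
end
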